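/- arXiv:math/0112311 — 7 statements merged into one kernel-verified Lean document; each statement's English description precedes it below -/
import Mathlib

section
/- A linear functional φ on the space of binary forms of degree d can be written as a sum of r evaluations at distinct points of P^1 if and only if the space A = {f ∈ S_r : φ(f·g) = 0 for all g ∈ S_{d−r}} contains a polynomial with r distinct roots (i.e., A is not contained in the discriminant hypersurface Δ_r). -/
/-!
If `φ = ∑ λᵢ ev(αᵢ)`, the product of the linear forms vanishing at the `αᵢ` lies in `A`.
Conversely, let `f ∈ A` be a product of linear forms with distinct roots `αᵢ`. Multiplication
by `f` embeds `S_{d-r}` into the forms of `S_d` vanishing at all `αᵢ`. Products of linear forms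
interpolate, so evaluation at the `r ≤ d` points is onto `Kʳ` and that space of forms has
dimension `d + 1 - r = dim S_{d-r}`; hence every form of `S_d` vanishing at the `αᵢ` is a
multiple of `f`. So `φ` vanishes on the common kernel of the `ev(αᵢ)` on `S_d`, and therefore
is a linear combination of them there.
-/

open MvPolynomial Finset

noncomputable section

def linForm (K : Type) [Field K] (c : Fin 2 → K) : MvPolynomial (Fin 2) K :=
  C (c 0) * X 0 + C (c 1) * X 1

/-- `α` is not a scalar multiple of `β` (for nonzero vectors: distinct points of `ℙ¹`). -/
def NonProp (K : Type) [Field K] (α β : Fin 2 → K) : Prop := ∀ t : K, α ≠ t • β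

/-- The Waring rank of a binary form: the least `r` such that `q` is a sum of `r`
`d`-th powers of linear forms. -/
def waringRank (K : Type) [Field K] (d : ℕ) (q : MvPolynomial (Fin 2) K) : ℕ :=
  sInf {r : ℕ | ∃ L : Fin r → Fin 2 → K, q = ∑ i, linForm K (L i) ^ d}

namespace BinaryForm

open Module

variable {K : Type} [Field K]

lemma eval_linForm (x c : Fin 2 → K) : eval x (linForm K c) = c 0 * x 0 + c 1 * x 1 := by
  simp [linForm]

lemma isHomogeneous_linForm (c : Fin 2 → K) : (linForm K c).IsHomogeneous 1 :=
  (isHomogeneous_C_mul_X _ _).add (isHomogeneous_C_mul_X _ _)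

lemma isHomogeneous_prod_linForm {ι : Type*} (s : Finset ι) (c : ι → Fin 2 → K) :
    (∏ i ∈ s, linForm K (c i)).IsHomogeneous #s := by
  simpa using IsHomogeneous.prod s _ (fun _ => 1) fun i _ => isHomogeneous_linForm (c i)

lemma linForm_ne_zero {c : Fin 2 → K} (hc : c ≠ 0) : linForm K c ≠ 0 := by
  contrapose! hc
  ext j; fin_cases j
  · simpa [eval_linForm] using congrArg (eval ![1, 0]) hc
  · simpa [eval_linForm] using congrArg (eval ![0, 1]) hc

lemma exists_eval_linForm_ne_zero {x : Fin 2 → K} (hx : x ≠ 0) :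
    ∃ c, eval x (linForm K c) ≠ 0 := by
  by_contra! h
  apply hx
  ext j; fin_cases j
  · simpa [eval_linForm] using h ![1, 0]
  · simpa [eval_linForm] using h ![0, 1]

def perp (x : Fin 2 → K) : Fin 2 → K := ![-x 1, x 0]

lemma eval_linForm_perp_self (x : Fin 2 → K) : eval x (linForm K (perp x)) = 0 := by
  simp [eval_linForm, perp, mul_comm]

lemma eval_perp_linForm_self (c : Fin 2 → K) : eval (perp c) (linForm K c) = 0 := by
  simp [eval_linForm, perp, mul_comm]

lemma perp_smul (t : K) (x : Fin 2 → K) : perp (t • x) = t • perp x := by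
  ext j; fin_cases j <;> simp [perp]

lemma perp_injective : Function.Injective (perp (K := K)) := by
  intro x y h
  ext j; fin_cases j
  · simpa [perp] using congrFun h 1
  · simpa [perp] using congrFun h 0

lemma perp_ne_zero {x : Fin 2 → K} (hx : x ≠ 0) : perp x ≠ 0 := by
  simpa [perp] using perp_injective.ne hx

lemma NonProp.perp {x y : Fin 2 → K} (h : NonProp K x y) : NonProp K (perp x) (perp y) :=
  fun t ht => h t (perp_injective (by rw [ht, perp_smul]))

lemma eval_linForm_perp_ne_zero {x y : Fin 2 → K} (hy : y ≠ 0) (h : NonProp K x y) :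
    eval x (linForm K (perp y)) ≠ 0 := by
  intro h0
  simp only [eval_linForm, perp, Matrix.cons_val_zero, Matrix.cons_val_one] at h0
  by_cases hy0 : y 0 = 0
  · have hy1 : y 1 ≠ 0 := fun hy1 => hy (by ext j; fin_cases j <;> simp [hy0, hy1])
    refine h (x 1 / y 1) (funext fun j => ?_)
    fin_cases j
    · simpa [hy0, hy1] using h0
    · simp [hy1]
  · refine h (x 0 / y 0) (funext fun j => ?_)
    fin_cases j
    · simp [hy0]
    · simp only [Fin.mk_one, Pi.smul_apply, smul_eq_mul]
      rw [div_mul_eq_mul_div, eq_div_iff hy0]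
      linear_combination h0

lemma exists_isHomogeneous_eval_ne_zero_eval_eq_zero {ι : Type*} [Fintype ι] [DecidableEq ι]
    {n : ℕ} (hn : Fintype.card ι ≤ n + 1) (x : ι → Fin 2 → K) (hx : ∀ j, x j ≠ 0) (i : ι)
    (hxi : ∀ j ≠ i, NonProp K (x i) (x j)) :
    ∃ h : MvPolynomial (Fin 2) K, h.IsHomogeneous n ∧ eval (x i) h ≠ 0 ∧
      ∀ j ≠ i, eval (x j) h = 0 := by
  obtain ⟨c, hc⟩ := exists_eval_linForm_ne_zero (hx i)
  refine ⟨(∏ j ∈ univ.erase i, linForm K (perp (x j))) * linForm K c ^ (n + 1 - Fintype.card ι),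
    ?_, ?_, fun j hj => ?_⟩
  · convert (isHomogeneous_prod_linForm _ _).mul ((isHomogeneous_linForm c).pow _) using 1
    rw [card_erase_of_mem (mem_univ i), card_univ]
    have := Fintype.card_pos_iff.mpr ⟨i⟩
    omega
  · simp only [map_mul, map_prod, map_pow]
    exact mul_ne_zero (prod_ne_zero_iff.mpr fun j hj =>
      eval_linForm_perp_ne_zero (hx j) (hxi j (mem_erase.mp hj).1)) (pow_ne_zero _ hc)
  · rw [map_mul, map_prod,
      prod_eq_zero (mem_erase.mpr ⟨hj, mem_univ j⟩) (eval_linForm_perp_self (x j)), zero_mul]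

variable (K) in
def evalPoints {ι : Type*} (n : ℕ) (x : ι → Fin 2 → K) :
    homogeneousSubmodule (Fin 2) K n →ₗ[K] ι → K :=
  LinearMap.pi fun i => (aeval (x i)).toLinearMap ∘ₗ (homogeneousSubmodule (Fin 2) K n).subtype

@[simp]
lemma evalPoints_apply {ι : Type*} (n : ℕ) (x : ι → Fin 2 → K)
    (q : homogeneousSubmodule (Fin 2) K n) (i : ι) : evalPoints K n x q i = eval (x i) q := by
  simp [evalPoints]

lemma evalPoints_surjective {ι : Type*} [Fintype ι] {n : ℕ} (hn : Fintype.card ι ≤ n + 1)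
    (x : ι → Fin 2 → K) (hx : ∀ i, x i ≠ 0) (hxx : Pairwise fun i j => NonProp K (x i) (x j)) :
    Function.Surjective (evalPoints K n x) := by
  classical
  rw [← LinearMap.range_eq_top, eq_top_iff, ← (Pi.basisFun K ι).span_eq, Submodule.span_le]
  rintro _ ⟨i, rfl⟩
  obtain ⟨h, hh, hhi, hhj⟩ :=
    exists_isHomogeneous_eval_ne_zero_eval_eq_zero hn x hx i fun j hj => hxx hj.symm
  refine ⟨(eval (x i) h)⁻¹ • ⟨h, hh⟩, funext fun j => ?_⟩
  by_cases hij : j = i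
  · subst hij; simp [hhi]
  · simp [hhj j hij, hij]

lemma finrank_homogeneousSubmodule_fin_two (n : ℕ) :
    finrank K (homogeneousSubmodule (Fin 2) K n) = n + 1 := by
  set m : Fin (n + 1) → Fin 2 →₀ ℕ :=
    fun k => Finsupp.single 0 (k : ℕ) + Finsupp.single 1 (n - (k : ℕ))
  have hm : Function.Injective m := fun k l h => Fin.ext (by simpa [m] using congrArg (· 0) h)
  have hdeg : {e : Fin 2 →₀ ℕ | e.degree = n} = Set.range m := by
    ext e
    simp only [Set.mem_ofPred_eq, Set.mem_range, Finsupp.degree_eq_sum, Fin.sum_univ_two]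
    constructor
    · intro h
      refine ⟨⟨e 0, by omega⟩, ?_⟩
      ext j; fin_cases j <;> simp [m, ← h]
    · rintro ⟨k, rfl⟩
      simp [m, Nat.add_sub_cancel' (Nat.lt_succ_iff.mp k.isLt)]
  have hspan : homogeneousSubmodule (Fin 2) K n =
      Submodule.span K (Set.range (basisMonomials (Fin 2) K ∘ m)) := by
    rw [homogeneousSubmodule_eq_finsupp_supported, AddMonoidAlgebra.supported_eq_span_single,
      hdeg, ← Set.range_comp, coe_basisMonomials]
    rfl
  rw [hspan, finrank_span_eq_card ((basisMonomials (Fin 2) K).linearIndependent.comp m hm),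
    Fintype.card_fin]

lemma exists_eq_prod_linForm_mul {ι : Type*} [Fintype ι] {d : ℕ} (hd : Fintype.card ι ≤ d)
    (c : ι → Fin 2 → K) (hc : ∀ i, c i ≠ 0) (hcc : Pairwise fun i j => NonProp K (c i) (c j))
    {q : MvPolynomial (Fin 2) K} (hq : q.IsHomogeneous d) (hqc : ∀ i, eval (perp (c i)) q = 0) :
    ∃ g : MvPolynomial (Fin 2) K, g.IsHomogeneous (d - Fintype.card ι) ∧
      q = (∏ i, linForm K (c i)) * g := by
  set f := ∏ i, linForm K (c i)
  have hmul : ∀ g ∈ homogeneousSubmodule (Fin 2) K (d - Fintype.card ι),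
      LinearMap.mulLeft K f g ∈ homogeneousSubmodule (Fin 2) K d := fun g hg => by
    simpa [Nat.add_sub_cancel' hd] using (isHomogeneous_prod_linForm univ c).mul hg
  set T := (LinearMap.mulLeft K f).restrict hmul
  set V := evalPoints K d (fun i => perp (c i))
  have hT : Function.Injective T := fun g g' h => Subtype.ext <|
    mul_right_injective₀ (prod_ne_zero_iff.mpr fun i _ => linForm_ne_zero (hc i))
      (congrArg Subtype.val h)
  have hTV : LinearMap.range T ≤ LinearMap.ker V := by
    rintro _ ⟨g, rfl⟩
    ext i
    have hfi : eval (perp (c i)) f = 0 := by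
      rw [map_prod]; exact prod_eq_zero (mem_univ i) (eval_perp_linForm_self (c i))
    simp [T, V, hfi]
  have hV : Function.Surjective V := evalPoints_surjective (by omega) _
    (fun i => perp_ne_zero (hc i)) fun i j hij => NonProp.perp (hcc hij)
  have : FiniteDimensional K (homogeneousSubmodule (Fin 2) K d) :=
    Module.finite_of_finrank_eq_succ (finrank_homogeneousSubmodule_fin_two d)
  have hker : LinearMap.range T = LinearMap.ker V := by
    refine Submodule.eq_of_le_of_finrank_eq hTV ?_
    have := V.finrank_range_add_finrank_ker
    rw [LinearMap.range_eq_top.mpr hV, finrank_top, finrank_fintype_fun_eq_card,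
      finrank_homogeneousSubmodule_fin_two] at this
    rw [LinearMap.finrank_range_of_inj hT, finrank_homogeneousSubmodule_fin_two]
    omega
  obtain ⟨g, hg⟩ : ⟨q, hq⟩ ∈ LinearMap.range T := hker ▸ LinearMap.mem_ker.mpr (funext hqc)
  exact ⟨g, g.2, (congrArg Subtype.val hg).symm⟩

lemma exists_eq_sum_eval_of_dual_mul_eq_zero {ι : Type*} [Fintype ι] {d : ℕ}
    (hd : Fintype.card ι ≤ d) (c : ι → Fin 2 → K) (hc : ∀ i, c i ≠ 0)
    (hcc : Pairwise fun i j => NonProp K (c i) (c j)) (φ : Dual K (MvPolynomial (Fin 2) K))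
    (hφ : ∀ g : MvPolynomial (Fin 2) K, g.IsHomogeneous (d - Fintype.card ι) →
      φ ((∏ i, linForm K (c i)) * g) = 0) :
    ∃ lam : ι → K, ∀ q : MvPolynomial (Fin 2) K, q.IsHomogeneous d →
      φ q = ∑ i, lam i * eval (perp (c i)) q := by
  set S := homogeneousSubmodule (Fin 2) K d
  have hspan : φ ∘ₗ S.subtype ∈
      Submodule.span K (Set.range fun i => (aeval (perp (c i))).toLinearMap ∘ₗ S.subtype) := by
    refine mem_span_of_iInf_ker_le_ker fun q hq => ?_
    obtain ⟨g, hg, hqg⟩ := exists_eq_prod_linForm_mul hd c hc hcc q.2 fun i => by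
      simpa using (Submodule.mem_iInf _).mp hq i
    simp [hqg, hφ g hg]
  obtain ⟨lam, hlam⟩ := (Submodule.mem_span_range_iff_exists_fun K).mp hspan
  exact ⟨lam, fun q hq => by simpa using (LinearMap.congr_fun hlam ⟨q, hq⟩).symm⟩

end BinaryForm

open BinaryForm

theorem stmt1_general (K : Type) [Field K] (d r : ℕ) (hr : r ≤ d)
    (φ : Module.Dual K (MvPolynomial (Fin 2) K)) :
    (∃ (lam : Fin r → K) (α : Fin r → Fin 2 → K),
        (∀ i, α i ≠ 0) ∧ (∀ i j, i ≠ j → NonProp K (α i) (α j)) ∧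
        ∀ f : MvPolynomial (Fin 2) K, f.IsHomogeneous d →
          φ f = ∑ i, lam i * eval (α i) f) ↔
    (∃ f : MvPolynomial (Fin 2) K, f.IsHomogeneous r ∧
        (∀ g : MvPolynomial (Fin 2) K, g.IsHomogeneous (d - r) → φ (f * g) = 0) ∧
        ∃ β : Fin r → Fin 2 → K, (∀ i, β i ≠ 0) ∧
          (∀ i j, i ≠ j → NonProp K (β i) (β j)) ∧ f = ∏ i, linForm K (β i)) := by
  constructor
  · rintro ⟨lam, α, hα, hαα, hφ⟩
    have hf : (∏ i, linForm K (perp (α i))).IsHomogeneous r := by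
      simpa using isHomogeneous_prod_linForm univ fun i => perp (α i)
    refine ⟨_, hf, fun g hg => ?_, _, fun i => perp_ne_zero (hα i),
      fun i j hij => (hαα i j hij).perp, rfl⟩
    rw [hφ _ (by simpa [Nat.add_sub_cancel' hr] using hf.mul hg)]
    refine sum_eq_zero fun i _ => ?_
    rw [map_mul, map_prod, prod_eq_zero (mem_univ i) (eval_linForm_perp_self (α i)), zero_mul,
      mul_zero]
  · rintro ⟨_, -, hφ, β, hβ, hββ, rfl⟩
    obtain ⟨lam, hlam⟩ := exists_eq_sum_eval_of_dual_mul_eq_zero (by simpa using hr) β hβ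
      (fun i j => hββ i j) φ (by simpa using hφ)
    exact ⟨lam, _, fun i => perp_ne_zero (hβ i), fun i j hij => (hββ i j hij).perp, hlam⟩

/-- Lemma 6 (`igual`): `φ` is a combination of `r` evaluations at distinct points of `ℙ¹`
iff `A = {f ∈ S_r : φ(fg) = 0 ∀ g ∈ S_{d-r}}` contains a form with `r` distinct roots. -/
theorem stmt1 (K : Type) [Field K] [IsAlgClosed K] [CharZero K] (d r : ℕ) (hr : r ≤ d)
    (φ : Module.Dual K (MvPolynomial (Fin 2) K)) :
    (∃ (lam : Fin r → K) (α : Fin r → Fin 2 → K),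
        (∀ i, α i ≠ 0) ∧ (∀ i j, i ≠ j → NonProp K (α i) (α j)) ∧
        ∀ f : MvPolynomial (Fin 2) K, f.IsHomogeneous d →
          φ f = ∑ i, lam i * eval (α i) f) ↔
    (∃ f : MvPolynomial (Fin 2) K, f.IsHomogeneous r ∧
        (∀ g : MvPolynomial (Fin 2) K, g.IsHomogeneous (d - r) → φ (f * g) = 0) ∧
        ∃ β : Fin r → Fin 2 → K, (∀ i, β i ≠ 0) ∧
          (∀ i j, i ≠ j → NonProp K (β i) (β j)) ∧ f = ∏ i, linForm K (β i)) :=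
  stmt1_general K d r hr φ
end
end

section
/- If φ ∈ S_d^* satisfies φ(f·g) = 0 for all g ∈ S_{d−r}, where f ∈ S_r is a product of r pairwise non-proportional linear forms L_1,...,L_r with zeros α_1,...,α_r, then φ is a linear combination of the evaluation functionals ev(α_1),...,ev(α_r). -/
open MvPolynomial Finset

noncomputable section

/-!
Lagrange interpolation. As `r ≤ d + 1` and `L i (α j) ≠ 0` for `i ≠ j`, there are forms
`P i ∈ S_d` with `P i (α j) = δ_ij`, and for `f ∈ S_d` the form `f - ∑ f(α i) • P i` vanishes at
every `α i`. A binary form vanishing at the zero `α` of a linear form `L` vanishes on the whole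
line `V(L) = K α` by homogeneity, so it lies in `(L)` by the Nullstellensatz, `(L)` being prime.
The `L i` are pairwise non-associated primes, hence the difference is `(∏ L i) * h` with
`h ∈ S_{d-r}`, and `φ` kills it.
-/

namespace MvPolynomial

variable {σ R : Type*}

theorem IsHomogeneous.eval_smul [CommSemiring R] {g : MvPolynomial σ R} {n : ℕ}
    (hg : g.IsHomogeneous n) (t : R) (x : σ → R) : eval (t • x) g = t ^ n * eval x g := by
  rw [eval_eq, eval_eq, Finset.mul_sum]
  refine Finset.sum_congr rfl fun m hm => ?_
  have hdeg : ∑ i ∈ m.support, m i = n := by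
    simpa [Finsupp.weight_apply, Finsupp.sum] using hg (mem_support_iff.mp hm)
  simp only [Pi.smul_apply, smul_eq_mul, mul_pow, Finset.prod_mul_distrib,
    Finset.prod_pow_eq_pow_sum, hdeg]
  ring

section GradedAlgebra

attribute [local instance] gradedAlgebra

theorem IsHomogeneous.exists_eq_mul_of_dvd [CommSemiring R] {p g : MvPolynomial σ R} {m n : ℕ}
    (hp : p.IsHomogeneous m) (hg : g.IsHomogeneous n) (hpg : p ∣ g) :
    ∃ h : MvPolynomial σ R, h.IsHomogeneous (n - m) ∧ g = p * h := by
  classical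
  obtain ⟨q, rfl⟩ := hpg
  have hcomp : homogeneousComponent n (p * q) =
      if m ≤ n then p * homogeneousComponent (n - m) q else 0 := by
    simpa only [← decomposition.decompose'_apply, DirectSum.Decomposition.decompose'_eq] using
      DirectSum.coe_decompose_mul_of_left_mem (homogeneousSubmodule σ R) n (b := q)
        ((mem_homogeneousSubmodule m p).mpr hp)
  rw [homogeneousComponent_eq_self hg] at hcomp
  split_ifs at hcomp
  · exact ⟨_, homogeneousComponent_isHomogeneous _ _, hcomp⟩
  · exact ⟨0, isHomogeneous_zero _ _ _, by rw [hcomp, mul_zero]⟩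

end GradedAlgebra

theorem prime_of_totalDegree_eq_one {K : Type*} [Field K] {p : MvPolynomial σ K}
    (hp : p.totalDegree = 1) : Prime p := by
  refine (irreducible_of_totalDegree_eq_one hp fun x hx => ?_).prime
  refine isUnit_iff_ne_zero.mpr fun hx0 => ?_
  have : p = 0 := by ext m; simpa [hx0] using hx m
  simp [this] at hp

theorem exists_isHomogeneous_eval_eq_ite {ι : Type*} [Fintype ι] [DecidableEq ι] {K : Type*}
    [Field K] {L : ι → MvPolynomial σ K} {α : ι → σ → K} (hL : ∀ i, (L i).IsHomogeneous 1)
    (hα : ∀ i, α i ≠ 0) (hzero : ∀ i, eval (α i) (L i) = 0)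
    (hsep : ∀ i j, i ≠ j → eval (α j) (L i) ≠ 0) {d : ℕ} (hd : Fintype.card ι ≤ d + 1) :
    ∃ P : ι → MvPolynomial σ K, (∀ i, (P i).IsHomogeneous d) ∧
      ∀ i j, eval (α j) (P i) = if j = i then 1 else 0 := by
  have : ∀ i, ∃ ℓ : MvPolynomial σ K, ℓ.IsHomogeneous 1 ∧ eval (α i) ℓ ≠ 0 := fun i => by
    obtain ⟨k, hk⟩ := Function.ne_iff.mp (hα i)
    exact ⟨X k, isHomogeneous_X K k, by simpa using hk⟩
  choose ℓ hℓ hℓα using this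
  -- `∏_{j ≠ i} L j` vanishes at the `α j`, `j ≠ i`, but not at `α i`; `ℓ i ^ _` pads the degree
  let Q i := (∏ j ∈ univ.erase i, L j) * ℓ i ^ (d + 1 - Fintype.card ι)
  have hQ : ∀ i, eval (α i) (Q i) ≠ 0 := fun i => by
    simp only [Q, map_mul, map_prod, map_pow]
    exact mul_ne_zero (prod_ne_zero_iff.mpr fun j hj => hsep j i (ne_of_mem_erase hj))
      (pow_ne_zero _ (hℓα i))
  refine ⟨fun i => C (eval (α i) (Q i))⁻¹ * Q i, fun i => ?_, fun i j => ?_⟩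
  · have hcard := Fintype.card_pos_iff.mpr ⟨i⟩
    have hdeg : ∑ _j ∈ univ.erase i, 1 + 1 * (d + 1 - Fintype.card ι) = d := by
      rw [sum_const, smul_eq_mul, mul_one, card_erase_of_mem (mem_univ i), card_univ]
      omega
    exact hdeg ▸ ((IsHomogeneous.prod _ _ _ fun j _ => hL j).mul ((hℓ i).pow _)).C_mul _
  · split_ifs with hji
    · subst hji
      rw [map_mul, eval_C, inv_mul_cancel₀ (hQ j)]
    · have hQj : eval (α j) (Q i) = 0 := by
        simp only [Q, map_mul, map_prod]
        rw [prod_eq_zero (mem_erase.mpr ⟨hji, mem_univ j⟩) (hzero j), zero_mul]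
      rw [map_mul, hQj, mul_zero]

end MvPolynomial

theorem exists_eq_smul_of_dotProduct_eq_zero {K : Type*} [Field K] {a v x : Fin 2 → K}
    (ha : a ≠ 0) (hv : v ≠ 0) (hav : a ⬝ᵥ v = 0) (hax : a ⬝ᵥ x = 0) : ∃ t : K, x = t • v := by
  simp only [dotProduct, Fin.sum_univ_two] at hav hax
  have hcross : x 0 * v 1 = x 1 * v 0 := by
    obtain ha0 | ha1 : a 0 ≠ 0 ∨ a 1 ≠ 0 := by
      simpa [Fin.exists_fin_two] using Function.ne_iff.mp ha
    · apply mul_left_cancel₀ ha0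
      linear_combination v 1 * hax - x 1 * hav
    · apply mul_left_cancel₀ ha1
      linear_combination x 0 * hav - v 0 * hax
  obtain hv0 | hv1 : v 0 ≠ 0 ∨ v 1 ≠ 0 := by
    simpa [Fin.exists_fin_two] using Function.ne_iff.mp hv
  · refine ⟨x 0 / v 0, funext (Fin.forall_fin_two.mpr ⟨?_, ?_⟩)⟩ <;>
      rw [Pi.smul_apply, smul_eq_mul, div_mul_eq_mul_div, eq_div_iff hv0]
    exact hcross.symm
  · refine ⟨x 1 / v 1, funext (Fin.forall_fin_two.mpr ⟨?_, ?_⟩)⟩ <;>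
      rw [Pi.smul_apply, smul_eq_mul, div_mul_eq_mul_div, eq_div_iff hv1]
    exact hcross

section BinaryForms

variable {K : Type} [Field K]

theorem eval_linForm (c x : Fin 2 → K) : eval x (linForm K c) = c ⬝ᵥ x := by
  simp [linForm, dotProduct, Fin.sum_univ_two]

theorem isHomogeneous_linForm (c : Fin 2 → K) : (linForm K c).IsHomogeneous 1 :=
  (isHomogeneous_C_mul_X (c 0) 0).add (isHomogeneous_C_mul_X (c 1) 1)

theorem linForm_ne_zero {c : Fin 2 → K} (hc : c ≠ 0) : linForm K c ≠ 0 := fun h =>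
  hc (dotProduct_eq_zero c fun x => by rw [← eval_linForm, h, map_zero])

theorem prime_linForm {c : Fin 2 → K} (hc : c ≠ 0) : Prime (linForm K c) :=
  prime_of_totalDegree_eq_one ((isHomogeneous_linForm c).totalDegree (linForm_ne_zero hc))

theorem eval_linForm_ne_zero_of_nonProp {a b α : Fin 2 → K} (hb : b ≠ 0) (hα : α ≠ 0)
    (hbα : eval α (linForm K b) = 0) (hab : NonProp K a b) : eval α (linForm K a) ≠ 0 := by
  intro haα
  rw [eval_linForm, dotProduct_comm] at haα hbα
  obtain ⟨t, ht⟩ := exists_eq_smul_of_dotProduct_eq_zero hα hb hbα haα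
  exact hab t ht

theorem linForm_dvd_of_eval_eq_zero [IsAlgClosed K] {c α : Fin 2 → K} (hc : c ≠ 0)
    (hα : α ≠ 0) (hcα : eval α (linForm K c) = 0) {g : MvPolynomial (Fin 2) K} {n : ℕ}
    (hg : g.IsHomogeneous n) (hgα : eval α g = 0) : linForm K c ∣ g := by
  have : (Ideal.span {linForm K c}).IsPrime :=
    (Ideal.span_singleton_prime (linForm_ne_zero hc)).mpr (prime_linForm hc)
  rw [← Ideal.mem_span_singleton,
    ← IsPrime.vanishingIdeal_zeroLocus (K := K) (Ideal.span {linForm K c}), mem_vanishingIdeal_iff]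
  intro x hx
  have hcx : eval x (linForm K c) = 0 :=
    mem_zeroLocus_iff.mp hx _ (Ideal.mem_span_singleton_self _)
  rw [eval_linForm] at hcα hcx
  obtain ⟨t, rfl⟩ := exists_eq_smul_of_dotProduct_eq_zero hc hα hcα hcx
  show eval (t • α) g = 0
  rw [hg.eval_smul, hgα, mul_zero]

theorem exists_eq_prod_linForm_mul [IsAlgClosed K] {ι : Type*} [Fintype ι]
    {c α : ι → Fin 2 → K} (hc : ∀ i, c i ≠ 0) (hα : ∀ i, α i ≠ 0)
    (hzero : ∀ i, eval (α i) (linForm K (c i)) = 0)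
    (hsep : ∀ i j, i ≠ j → eval (α j) (linForm K (c i)) ≠ 0)
    {g : MvPolynomial (Fin 2) K} {n : ℕ} (hg : g.IsHomogeneous n) (hgα : ∀ i, eval (α i) g = 0) :
    ∃ h : MvPolynomial (Fin 2) K,
      h.IsHomogeneous (n - Fintype.card ι) ∧ g = (∏ i, linForm K (c i)) * h := by
  have hprod : (∏ i, linForm K (c i)).IsHomogeneous (Fintype.card ι) := by
    simpa using IsHomogeneous.prod univ _ (fun _ => 1) fun i _ => isHomogeneous_linForm (c i)
  refine hprod.exists_eq_mul_of_dvd hg (prod_dvd_of_isRelPrime ?_ fun i _ =>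
    linForm_dvd_of_eval_eq_zero (hc i) (hα i) (hzero i) hg (hgα i))
  intro i _ j _ hij
  refine (prime_linForm (hc i)).irreducible.isRelPrime_iff_not_dvd.mpr ?_
  rintro ⟨q, hq : linForm K (c j) = linForm K (c i) * q⟩
  apply hsep j i hij.symm
  rw [hq, map_mul, hzero i, zero_mul]

end BinaryForms

theorem stmt2_general (K : Type) [Field K] [IsAlgClosed K] (d r : ℕ) (hr : r ≤ d)
    (φ : Module.Dual K (MvPolynomial (Fin 2) K))
    (c : Fin r → Fin 2 → K) (α : Fin r → Fin 2 → K)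
    (hc : ∀ i, c i ≠ 0) (hnp : ∀ i j, i ≠ j → NonProp K (c i) (c j))
    (hα : ∀ i, α i ≠ 0) (hzero : ∀ i, eval (α i) (linForm K (c i)) = 0)
    (hφ : ∀ g : MvPolynomial (Fin 2) K, g.IsHomogeneous (d - r) →
      φ ((∏ i, linForm K (c i)) * g) = 0) :
    ∃ lam : Fin r → K, ∀ f : MvPolynomial (Fin 2) K, f.IsHomogeneous d →
      φ f = ∑ i, lam i * eval (α i) f := by
  have hsep : ∀ i j, i ≠ j → eval (α j) (linForm K (c i)) ≠ 0 := fun i j hij =>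
    eval_linForm_ne_zero_of_nonProp (hc j) (hα j) (hzero j) (hnp i j hij)
  obtain ⟨P, hP, hPα⟩ := exists_isHomogeneous_eval_eq_ite (fun i => isHomogeneous_linForm (c i))
    hα hzero hsep (d := d) (by rw [Fintype.card_fin]; omega)
  refine ⟨fun i => φ (P i), fun f hf => ?_⟩
  set g := f - ∑ i, eval (α i) f • P i
  have hg : g.IsHomogeneous d := hf.sub (IsHomogeneous.sum _ _ _ fun i _ => by
    rw [smul_eq_C_mul]; exact (hP i).C_mul _)
  have hgα : ∀ j, eval (α j) g = 0 := fun j => by simp [g, hPα]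
  obtain ⟨h, hh, hgh⟩ := exists_eq_prod_linForm_mul hc hα hzero hsep hg hgα
  calc φ f = φ g + ∑ i, eval (α i) f * φ (P i) := by simp [g]
    _ = ∑ i, φ (P i) * eval (α i) f := by
      rw [hgh, hφ h (by simpa using hh), zero_add]
      exact sum_congr rfl fun i _ => mul_comm _ _

/-- If `φ` kills `L₁⋯L_r · S_{d-r}` with the `L_i` pairwise non-proportional linear forms
with zeros `α_i`, then `φ` is a linear combination of the evaluations at the `α_i`. -/
theorem stmt2 (K : Type) [Field K] [IsAlgClosed K] [CharZero K] (d r : ℕ) (hr : r ≤ d)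
    (φ : Module.Dual K (MvPolynomial (Fin 2) K))
    (c : Fin r → Fin 2 → K) (α : Fin r → Fin 2 → K)
    (hc : ∀ i, c i ≠ 0) (hnp : ∀ i j, i ≠ j → NonProp K (c i) (c j))
    (hα : ∀ i, α i ≠ 0) (hzero : ∀ i, eval (α i) (linForm K (c i)) = 0)
    (hφ : ∀ g : MvPolynomial (Fin 2) K, g.IsHomogeneous (d - r) →
      φ ((∏ i, linForm K (c i)) * g) = 0) :
    ∃ lam : Fin r → K, ∀ f : MvPolynomial (Fin 2) K, f.IsHomogeneous d →
      φ f = ∑ i, lam i * eval (α i) f :=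
  stmt2_general K d r hr φ c α hc hnp hα hzero hφ
end
end

section
/- If φ = Σ_{i=1}^r λ_i ev(α_i) is a linear combination of r evaluation functionals, then every (s+1)×(d−s+1) Hankel matrix (Z_{i+j}) with Z_i = φ(x^{d−i} y^i) has rank at most r. -/
open MvPolynomial Finset

noncomputable section

/-- If `φ` is a linear combination of `r` evaluation functionals on `S_d`, then every
`(s+1)×(d-s+1)` Hankel matrix of `φ` has rank at most `r`. -/
theorem stmt7 (K : Type) [Field K] [IsAlgClosed K] [CharZero K] (d r s : ℕ) (hs : s ≤ d)
    (φ : Module.Dual K (MvPolynomial (Fin 2) K))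
    (lam : Fin r → K) (α : Fin r → Fin 2 → K)
    (hφ : ∀ f : MvPolynomial (Fin 2) K, f.IsHomogeneous d →
      φ f = ∑ i, lam i * eval (α i) f) :
    (Matrix.of fun (i : Fin (s + 1)) (j : Fin (d - s + 1)) =>
        φ (X 0 ^ (d - ((i : ℕ) + (j : ℕ))) * X 1 ^ ((i : ℕ) + (j : ℕ)))).rank ≤ r := by
  have key : (Matrix.of fun (i : Fin (s + 1)) (j : Fin (d - s + 1)) =>
        φ (X 0 ^ (d - ((i : ℕ) + (j : ℕ))) * X 1 ^ ((i : ℕ) + (j : ℕ)))) =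
      (Matrix.of fun (i : Fin (s + 1)) (k : Fin r) =>
        lam k * α k 0 ^ (s - (i : ℕ)) * α k 1 ^ (i : ℕ)) *
      (Matrix.of fun (k : Fin r) (j : Fin (d - s + 1)) =>
        α k 0 ^ (d - s - (j : ℕ)) * α k 1 ^ (j : ℕ)) := by
    ext i j
    have hi : (i : ℕ) ≤ s := Nat.lt_succ_iff.mp i.isLt
    have hj : (j : ℕ) ≤ d - s := Nat.lt_succ_iff.mp j.isLt
    have hij : (i : ℕ) + (j : ℕ) ≤ d := by omega
    have hhom : (X (0 : Fin 2) ^ (d - ((i : ℕ) + (j : ℕ))) *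
        X 1 ^ ((i : ℕ) + (j : ℕ)) : MvPolynomial (Fin 2) K).IsHomogeneous d := by
      have := ((isHomogeneous_X K (0 : Fin 2)).pow (d - ((i : ℕ) + (j : ℕ)))).mul
        ((isHomogeneous_X K (1 : Fin 2)).pow ((i : ℕ) + (j : ℕ)))
      simpa [Nat.sub_add_cancel hij] using this
    simp only [Matrix.mul_apply, Matrix.of_apply]
    rw [hφ _ hhom]
    refine Finset.sum_congr rfl fun k _ => ?_
    have e1 : d - ((i : ℕ) + (j : ℕ)) = (s - (i : ℕ)) + (d - s - (j : ℕ)) := by omega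
    have e2 : (i : ℕ) + (j : ℕ) = (i : ℕ) + (j : ℕ) := rfl
    simp only [eval_mul, eval_pow, eval_X, e1, pow_add]
    ring
  rw [key]
  calc _ ≤ _ := Matrix.rank_mul_le_right _ _
    _ ≤ Fintype.card (Fin r) := Matrix.rank_le_card_height _
    _ = r := Fintype.card_fin r
end
end

section
/- Let Z be a linear subspace of S_m (binary forms of degree m) with no common base point in P^1 (no point of P^1 is a root of every element of Z). If Z is a proper subspace, then dim(S_1 · Z) ≥ dim Z + 2, where S_1 · Z is the span of products L·f with L ∈ S_1, f ∈ Z. -/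
noncomputable section Stmt10Aux
open Polynomial
variable {K : Type} [Field K]

open Polynomial
variable {K : Type} [Field K]

instance degreeLT_fd (n : ℕ) : FiniteDimensional K (degreeLT K n) :=
  Module.Finite.equiv (degreeLTEquiv K n).symm

lemma mulX_degreeLT {u : K[X]} {n : ℕ} (hu : u.degree < (n : WithBot ℕ)) :
    (X * u).degree < ((n + 1 : ℕ) : WithBot ℕ) := by
  rcases eq_or_ne u 0 with rfl | h0
  · simpa using WithBot.bot_lt_coe (n+1)
  · rw [degree_mul, degree_X, degree_eq_natDegree h0] at *
    have : u.natDegree < n := by exact_mod_cast hu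
    exact_mod_cast (by omega : 1 + u.natDegree < n + 1)

lemma finrank_gP (g : K[X]) (hg : g ≠ 0) (d : ℕ) :
    Module.finrank K ((degreeLT K d).map (LinearMap.mulLeft K g)) = d := by
  rw [← LinearEquiv.finrank_eq (Submodule.equivMapOfInjective _ (mul_right_injective₀ hg) _)]
  rw [(degreeLTEquiv K d).finrank_eq]; simp

lemma exists_max_deg (m : ℕ) (U : Submodule K K[X]) (hU : U ≤ degreeLT K (m+1)) (hne : U ≠ ⊥) :
    ∃ v ∈ U, v ≠ 0 ∧ ∀ u ∈ U, u.degree ≤ v.degree := by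
  have hne' : ∃ u ∈ U, u ≠ 0 := by
    rcases Submodule.exists_mem_ne_zero_of_ne_bot hne with ⟨u, hu, h⟩; exact ⟨u, hu, h⟩
  set s : Set ℕ := {n | ∃ u ∈ U, u ≠ 0 ∧ u.natDegree = n} with hs
  have hbdd : BddAbove s := by
    refine ⟨m, fun n hn => ?_⟩
    rcases hn with ⟨u, hu, hu0, rfl⟩
    have := natDegree_lt_iff_degree_lt hu0 |>.2 (mem_degreeLT.1 (hU hu))
    omega
  have hsne : s.Nonempty := by
    rcases hne' with ⟨u, hu, h0⟩; exact ⟨u.natDegree, u, hu, h0, rfl⟩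
  rcases Nat.sSup_mem hsne hbdd with ⟨v, hv, hv0, hvd⟩
  refine ⟨v, hv, hv0, fun u hu => ?_⟩
  rcases eq_or_ne u 0 with rfl | h0
  · simp
  · rw [degree_eq_natDegree h0, degree_eq_natDegree hv0, Nat.cast_le, hvd]
    exact le_csSup hbdd ⟨u, hu, h0, rfl⟩

lemma cut_rank (U : Submodule K K[X]) [FiniteDimensional K U] (n : ℕ)
    (hall : ∀ u ∈ U, u.degree ≤ (n : WithBot ℕ)) :
    Module.finrank K U ≤ Module.finrank K (U ⊓ degreeLT K n : Submodule K K[X]) + 1 := by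
  set L : U →ₗ[K] K := (lcoeff K n) ∘ₗ U.subtype with hL
  have h1 := LinearMap.finrank_range_add_finrank_ker L
  have h2 : Module.finrank K (LinearMap.range L) ≤ 1 := by
    simpa using (LinearMap.range L).finrank_le
  have h3 : (LinearMap.ker L).map U.subtype ≤ U ⊓ degreeLT K n := by
    rintro p ⟨⟨u, hu⟩, hk, rfl⟩
    refine ⟨hu, mem_degreeLT.2 ?_⟩
    have hc : u.coeff n = 0 := hk
    rcases lt_or_eq_of_le (hall u hu) with h | h
    · exact h
    · exact absurd hc (coeff_ne_zero_of_eq_degree h)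
  have h4 : Module.finrank K (LinearMap.ker L) ≤
      Module.finrank K (U ⊓ degreeLT K n : Submodule K K[X]) := by
    rw [← Submodule.finrank_map_subtype_eq]
    have : FiniteDimensional K (U ⊓ degreeLT K n : Submodule K K[X]) :=
      Submodule.finiteDimensional_inf_left U _
    exact Submodule.finrank_mono h3
  omega

lemma key (m : ℕ) : ∀ d : ℕ, ∀ U : Submodule K K[X], U ≤ degreeLT K (m+1) →
    Module.finrank K U = d + 1 →
    Module.finrank K ↥(U ⊔ U.map (LinearMap.mulLeft K (X : K[X]))) ≤ d + 2 →
    ∃ g : K[X], g ≠ 0 ∧ U = (degreeLT K (d+1)).map (LinearMap.mulLeft K g) := by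
  classical
  intro d
  induction d with
  | zero =>
    intro U hUle hrk _
    haveI : FiniteDimensional K U := Submodule.finiteDimensional_of_le hUle
    obtain ⟨v, hv0, hv⟩ := finrank_eq_one_iff'.1 hrk
    refine ⟨v, by simpa using hv0, ?_⟩
    ext p
    simp only [Submodule.mem_map]
    constructor
    · intro hp
      obtain ⟨c, hc⟩ := hv ⟨p, hp⟩
      refine ⟨C c, mem_degreeLT.2 ((degree_C_le).trans_lt (by exact_mod_cast zero_lt_one)), ?_⟩
      have hc' : c • (v : K[X]) = p := congrArg Subtype.val hc
      rw [LinearMap.mulLeft_apply, mul_comm, ← Polynomial.smul_eq_C_mul]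
      exact hc'
    · rintro ⟨q, hq, rfl⟩
      have : q = C (q.coeff 0) := eq_C_of_degree_le_zero (by
        have := mem_degreeLT.1 hq
        exact Order.le_of_lt_succ (by exact_mod_cast this))
      rw [LinearMap.mulLeft_apply, this, mul_comm, ← Polynomial.smul_eq_C_mul]
      exact U.smul_mem (q.coeff 0) v.2
  | succ d IH =>
    intro U hUle hrk hW
    haveI : FiniteDimensional K U := Submodule.finiteDimensional_of_le hUle
    set W := U ⊔ U.map (LinearMap.mulLeft K (X : K[X])) with hWdef
    have hWle : W ≤ degreeLT K (m+2) := by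
      refine sup_le (hUle.trans (degreeLT_mono (by omega))) ?_
      rintro p ⟨u, hu, rfl⟩
      exact mem_degreeLT.2 (by exact_mod_cast mulX_degreeLT (mem_degreeLT.1 (hUle hu)))
    haveI : FiniteDimensional K W := Submodule.finiteDimensional_of_le hWle
    have hUne : U ≠ ⊥ := by
      intro h; rw [h, finrank_bot] at hrk; omega
    obtain ⟨v, hvU, hv0, hvmax⟩ := exists_max_deg m U hUle hUne
    set n := v.natDegree with hn
    have hvdeg : v.degree = (n : WithBot ℕ) := degree_eq_natDegree hv0
    set U' := U ⊓ degreeLT K n with hU'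
    haveI : FiniteDimensional K U' := Submodule.finiteDimensional_inf_left U _
    have hU'le : U' ≤ U := inf_le_left
    -- finrank U' = d + 1
    have hub : Module.finrank K U' < Module.finrank K U := by
      refine Submodule.finrank_lt_finrank_of_lt (SetLike.lt_iff_le_and_exists.2 ⟨hU'le, v, hvU, ?_⟩)
      intro hvU'
      exact absurd (mem_degreeLT.1 hvU'.2) (by rw [hvdeg]; exact lt_irrefl _)
    have hlb := cut_rank U n (fun u hu => (hvmax u hu).trans_eq hvdeg)
    rw [← hU'] at hlb
    have hU'rk : Module.finrank K U' = d + 1 := by omega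
    -- the cut of W
    set Kcut := W ⊓ degreeLT K (n+1) with hKcut
    haveI : FiniteDimensional K Kcut := Submodule.finiteDimensional_inf_left W _
    have hXvW : X * v ∈ W := Submodule.mem_sup_right (Submodule.mem_map_of_mem hvU)
    have hXvdeg : (X * v).degree = ((n+1 : ℕ) : WithBot ℕ) := by
      rw [degree_mul, degree_X, hvdeg]; norm_cast; omega
    have hKcutlt : Module.finrank K Kcut < Module.finrank K W := by
      refine Submodule.finrank_lt_finrank_of_lt (SetLike.lt_iff_le_and_exists.2 ⟨inf_le_left, X * v, hXvW, ?_⟩)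
      intro hmem
      exact absurd (mem_degreeLT.1 hmem.2) (by rw [hXvdeg]; exact lt_irrefl _)
    have hKcutrk : Module.finrank K Kcut ≤ d + 2 := by omega
    -- W' ≤ Kcut
    have hW'le : U' ⊔ U'.map (LinearMap.mulLeft K (X : K[X])) ≤ Kcut := by
      refine sup_le (le_inf (hU'le.trans le_sup_left)
        ((inf_le_right : U' ≤ _).trans (degreeLT_mono (by omega)))) ?_
      refine le_inf ?_ ?_
      · exact (Submodule.map_mono hU'le).trans le_sup_right
      · rintro p ⟨u, hu, rfl⟩
        exact mem_degreeLT.2 (by exact_mod_cast mulX_degreeLT (mem_degreeLT.1 hu.2))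
    have hW'rk : Module.finrank K ↥(U' ⊔ U'.map (LinearMap.mulLeft K (X : K[X]))) ≤ d + 2 :=
      le_trans (Submodule.finrank_mono hW'le) (by omega)
    obtain ⟨g, hg0, hgU'⟩ := IH U' (hU'le.trans hUle) hU'rk hW'rk
    -- G
    set G := (degreeLT K (d+2)).map (LinearMap.mulLeft K g) with hG
    have hgXmem : ∀ i : ℕ, i < d + 1 → g * X ^ i ∈ U' := by
      intro i hi
      rw [hgU']
      exact Submodule.mem_map_of_mem (mem_degreeLT.2 (by
        rw [degree_X_pow]; exact_mod_cast hi))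
    -- degree bound on g
    have hgd : g.natDegree + d < n := by
      have := mem_degreeLT.1 (hgXmem d (by omega)).2
      rw [degree_mul, degree_X_pow, degree_eq_natDegree hg0] at this
      exact_mod_cast this
    have hGdeg : G ≤ degreeLT K (n+1) := by
      rintro p ⟨q, hq, rfl⟩
      rw [LinearMap.mulLeft_apply]
      rcases eq_or_ne q 0 with rfl | hq0
      · simpa [mem_degreeLT] using WithBot.bot_lt_coe (n+1)
      · refine mem_degreeLT.2 ?_
        rw [degree_mul, degree_eq_natDegree hg0, degree_eq_natDegree hq0]
        have hqd : q.natDegree < d + 2 := by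
          exact_mod_cast (degree_eq_natDegree hq0 ▸ mem_degreeLT.1 hq)
        exact_mod_cast (by omega : g.natDegree + q.natDegree < n + 1)
    have hGW : G ≤ W := by
      have hspan : degreeLT K (d+2) =
          Submodule.span K ↑((Finset.range (d+2)).image fun i => (X:K[X]) ^ i) :=
        degreeLT_eq_span_X_pow
      rw [hG, hspan, Submodule.map_span]
      refine Submodule.span_le.2 ?_
      rintro p ⟨q, hq, rfl⟩
      simp only [Finset.coe_image, Set.mem_image, Finset.mem_coe, Finset.mem_range] at hq
      obtain ⟨i, hi, rfl⟩ := hq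
      rw [LinearMap.mulLeft_apply]
      rcases Nat.lt_or_ge i (d+1) with h | h
      · exact Submodule.mem_sup_left (hU'le (hgXmem i h))
      · have : i = d + 1 := by omega
        subst this
        have : g * X ^ (d+1) = X * (g * X ^ d) := by ring
        rw [this]
        exact Submodule.mem_sup_right (Submodule.mem_map_of_mem (hU'le (hgXmem d (by omega))))
    have hGrk : Module.finrank K G = d + 2 := finrank_gP g hg0 (d+2)
    haveI : FiniteDimensional K G := Submodule.finiteDimensional_of_le (hGW.trans hWle)
    -- v ∈ G
    have hvG : v ∈ G := by
      by_contra hvG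
      have hTle : G ⊔ Submodule.span K {v} ≤ Kcut := by
        refine sup_le (le_inf hGW hGdeg) ?_
        rw [Submodule.span_le, Set.singleton_subset_iff]
        exact ⟨Submodule.mem_sup_left hvU, mem_degreeLT.2 (by rw [hvdeg]; exact_mod_cast by omega)⟩
      have hlt : G < G ⊔ Submodule.span K {v} :=
        SetLike.lt_iff_le_and_exists.2 ⟨le_sup_left, v,
          Submodule.mem_sup_right (Submodule.mem_span_singleton_self v), hvG⟩
      haveI : FiniteDimensional K (G ⊔ Submodule.span K {v} : Submodule K K[X]) :=
        Submodule.finiteDimensional_of_le (hTle.trans inf_le_left)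
      have := Submodule.finrank_lt_finrank_of_lt hlt
      have := Submodule.finrank_mono hTle
      omega
    -- U = U' ⊔ span v
    have hsple : U' ⊔ Submodule.span K {v} ≤ U := by
      refine sup_le hU'le ?_
      rw [Submodule.span_le, Set.singleton_subset_iff]; exact hvU
    have hsplt : U' < U' ⊔ Submodule.span K {v} := by
      refine SetLike.lt_iff_le_and_exists.2 ⟨le_sup_left, v,
        Submodule.mem_sup_right (Submodule.mem_span_singleton_self v), ?_⟩
      intro hvU'
      exact absurd (mem_degreeLT.1 hvU'.2) (by rw [hvdeg]; exact lt_irrefl _)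
    haveI : FiniteDimensional K (U' ⊔ Submodule.span K {v} : Submodule K K[X]) :=
        Submodule.finiteDimensional_of_le (hsple.trans hUle)
    have hUeq : U' ⊔ Submodule.span K {v} = U := by
      refine Submodule.eq_of_le_of_finrank_le hsple ?_
      have := Submodule.finrank_lt_finrank_of_lt hsplt
      omega
    have hUG : U ≤ G := by
      rw [← hUeq]
      refine sup_le ?_ ?_
      · rw [hgU']; exact Submodule.map_mono (degreeLT_mono (by omega))
      · rw [Submodule.span_le, Set.singleton_subset_iff]; exact hvG
    refine ⟨g, hg0, ?_⟩
    have hfin : U = G := Submodule.eq_of_le_of_finrank_le hUG (by omega)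
    rw [hfin, hG]


lemma uni [IsAlgClosed K] (m : ℕ) (U : Submodule K K[X])
    (hUle : U ≤ degreeLT K (m+1))
    (hdm : Module.finrank K U ≤ m)
    (hdeg : ∃ v ∈ U, v.degree = (m : WithBot ℕ))
    (heval : ∀ c : K, ∃ u ∈ U, Polynomial.eval c u ≠ 0) :
    Module.finrank K U + 2 ≤
      Module.finrank K ↥(U ⊔ U.map (LinearMap.mulLeft K (X : K[X]))) := by
  haveI : FiniteDimensional K U := Submodule.finiteDimensional_of_le hUle
  set d := Module.finrank K U with hd
  have hdpos : 0 < d := by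
    obtain ⟨u, hu, hne⟩ := heval 0
    have hu0 : u ≠ 0 := fun h => hne (by simp [h])
    rw [hd]
    exact Module.finrank_pos_iff_exists_ne_zero.2 ⟨⟨u, hu⟩, by simpa using hu0⟩
  by_contra hcon
  push_neg at hcon
  have hcon' : Module.finrank K ↥(U ⊔ U.map (LinearMap.mulLeft K (X : K[X]))) ≤ (d - 1) + 2 := by
    omega
  obtain ⟨g, hg0, hgU⟩ := key m (d-1) U hUle (by omega) hcon'
  have hdd : d - 1 + 1 = d := by omega
  rw [hdd] at hgU
  -- g is nonconstant
  obtain ⟨v, hvU, hvdeg⟩ := hdeg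
  have hv0 : v ≠ 0 := fun h => by simp [h] at hvdeg
  rw [hgU] at hvU
  obtain ⟨q, hq, rfl⟩ := hvU
  rw [LinearMap.mulLeft_apply] at hvdeg hv0
  have hq0 : q ≠ 0 := right_ne_zero_of_mul hv0
  have hnd : g.natDegree + q.natDegree = m := by
    rw [degree_mul, degree_eq_natDegree hg0, degree_eq_natDegree hq0] at hvdeg
    exact_mod_cast hvdeg
  have hqlt : q.natDegree < d := by
    have := mem_degreeLT.1 hq
    rw [degree_eq_natDegree hq0] at this
    exact_mod_cast this
  have hgdeg : g.degree ≠ 0 := by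
    rw [degree_eq_natDegree hg0]
    have : 0 < g.natDegree := by omega
    exact_mod_cast (by omega : (g.natDegree : ℤ) ≠ 0)
  obtain ⟨c, hc⟩ := IsAlgClosed.exists_root g hgdeg
  obtain ⟨u, hu, hune⟩ := heval c
  rw [hgU] at hu
  obtain ⟨q', _, rfl⟩ := hu
  rw [LinearMap.mulLeft_apply] at hune
  exact hune (by rw [eval_mul, hc.eq_zero, zero_mul])

abbrev phi (K : Type) [Field K] : MvPolynomial (Fin 2) K →ₐ[K] K[X] :=
  MvPolynomial.aeval ![Polynomial.X, 1]

lemma phi_monomial (s : Fin 2 →₀ ℕ) (c : K) :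
    phi K (MvPolynomial.monomial s c) = C c * X ^ (s 0) := by
  rw [MvPolynomial.aeval_monomial]
  congr 1
  rw [Finsupp.prod_fintype _ _ (fun i => pow_zero _), Fin.prod_univ_two]
  simp

lemma hom_support {m : ℕ} {f : MvPolynomial (Fin 2) K} (hf : f.IsHomogeneous m)
    {t : Fin 2 →₀ ℕ} (ht : MvPolynomial.coeff t f ≠ 0) : t 0 + t 1 = m := by
  have h := hf ht
  rw [Finsupp.weight_apply, Finsupp.sum_fintype _ _ (fun i => by simp), Fin.sum_univ_two] at h
  simpa using h

lemma phi_coeff {m : ℕ} {f : MvPolynomial (Fin 2) K} (hf : f.IsHomogeneous m)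
    (s : Fin 2 →₀ ℕ) (hs : s 0 + s 1 = m) :
    (phi K f).coeff (s 0) = MvPolynomial.coeff s f := by
  classical
  conv_lhs => rw [f.as_sum]
  rw [map_sum, Polynomial.finset_sum_coeff]
  have h : ∀ t ∈ f.support, (phi K (MvPolynomial.monomial t (MvPolynomial.coeff t f))).coeff (s 0)
      = if t = s then MvPolynomial.coeff t f else 0 := by
    intro t htmem
    have htm : t 0 + t 1 = m := hom_support hf (MvPolynomial.mem_support_iff.1 htmem)
    rw [phi_monomial, coeff_C_mul, coeff_X_pow]
    have : (s 0 = t 0) ↔ (t = s) := by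
      constructor
      · intro h0
        ext i
        fin_cases i
        · exact h0.symm
        · simpa using (by omega : t 1 = s 1)
      · intro h; rw [h]
    rw [if_congr this rfl rfl]
    split <;> simp_all
  rw [Finset.sum_congr rfl h, Finset.sum_ite_eq' f.support s]
  split
  · rfl
  · exact (MvPolynomial.notMem_support_iff.1 (by assumption)).symm

lemma phi_inj {m : ℕ} {f : MvPolynomial (Fin 2) K} (hf : f.IsHomogeneous m)
    (h : phi K f = 0) : f = 0 := by
  by_contra h0
  obtain ⟨s, hs⟩ := MvPolynomial.support_nonempty.2 h0
  have hc := MvPolynomial.mem_support_iff.1 hs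
  have := phi_coeff hf s (hom_support hf hc)
  rw [h, Polynomial.coeff_zero] at this
  exact hc this.symm

lemma phi_degree {m : ℕ} {f : MvPolynomial (Fin 2) K} (hf : f.IsHomogeneous m) :
    (phi K f).degree < ((m+1 : ℕ) : WithBot ℕ) := by
  conv_lhs => rw [f.as_sum]
  rw [map_sum]
  refine lt_of_le_of_lt (degree_sum_le _ _) ?_
  rw [Finset.sup_lt_iff (by exact_mod_cast WithBot.bot_lt_coe (m+1))]
  intro t htmem
  have htm : t 0 + t 1 = m := hom_support hf (MvPolynomial.mem_support_iff.1 htmem)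
  rw [phi_monomial]
  refine lt_of_le_of_lt (degree_C_mul_X_pow_le _ _) ?_
  exact_mod_cast (by omega : t 0 < m + 1)

lemma phi_eval (c : K) (f : MvPolynomial (Fin 2) K) :
    (phi K f).eval c = MvPolynomial.eval ![c, 1] f := by
  have h := congrFun (congrArg (fun g => g.toFun)
    (MvPolynomial.comp_aeval (f := ![Polynomial.X, (1 : K[X])]) (Polynomial.aeval c))) f
  simp only [AlgHom.toFun_eq_coe, AlgHom.coe_comp, Function.comp_apply] at h
  rw [Polynomial.coe_aeval_eq_eval] at h
  rw [h]
  have : (fun i => Polynomial.eval c (![Polynomial.X, (1:K[X])] i)) = ![c, 1] := by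
    funext i
    fin_cases i <;> simp
  rw [this, ← MvPolynomial.coe_aeval_eq_eval]
  rfl

lemma phi_coeff_top {m : ℕ} {f : MvPolynomial (Fin 2) K} (hf : f.IsHomogeneous m) :
    (phi K f).coeff m = MvPolynomial.eval ![(1:K), 0] f := by
  classical
  conv_lhs => rw [f.as_sum]
  conv_rhs => rw [f.as_sum]
  rw [map_sum, Polynomial.finset_sum_coeff, map_sum]
  refine Finset.sum_congr rfl ?_
  intro t htmem
  have htm : t 0 + t 1 = m := hom_support hf (MvPolynomial.mem_support_iff.1 htmem)
  rw [phi_monomial, coeff_C_mul, coeff_X_pow, MvPolynomial.eval_monomial]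
  rw [Finsupp.prod_fintype _ _ (fun i => pow_zero _), Fin.prod_univ_two]
  simp only [Matrix.cons_val_zero, Matrix.cons_val_one, Matrix.head_cons]
  rw [zero_pow_eq, one_pow]
  have hiff : ((m:ℕ) = t 0) ↔ (t 1 = 0) := by omega
  rw [if_congr hiff rfl rfl]
  split <;> simp

lemma hom_mem {K : Type} [Field K] {n : ℕ} {f : MvPolynomial (Fin 2) K}
    (h : f ∈ MvPolynomial.homogeneousSubmodule (Fin 2) K n) : f.IsHomogeneous n :=
  (MvPolynomial.mem_homogeneousSubmodule _ _).1 h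

def eHom (K : Type) [Field K] (n : ℕ) :
    ↥(MvPolynomial.homogeneousSubmodule (Fin 2) K n) →ₗ[K] ↥(degreeLT K (n+1)) :=
  LinearMap.codRestrict _ ((phi K).toLinearMap ∘ₗ (MvPolynomial.homogeneousSubmodule (Fin 2) K n).subtype)
    (fun x => mem_degreeLT.2 (phi_degree (hom_mem x.2)))

lemma eHom_inj (K : Type) [Field K] (n : ℕ) : Function.Injective (eHom K n) := by
  rw [injective_iff_map_eq_zero]
  intro a ha
  have h : phi K (a : MvPolynomial (Fin 2) K) = 0 := congrArg Subtype.val ha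
  exact Subtype.ext (phi_inj (hom_mem a.2) h)

instance hom_fd (K : Type) [Field K] (n : ℕ) :
    FiniteDimensional K ↥(MvPolynomial.homogeneousSubmodule (Fin 2) K n) :=
  Module.Finite.of_injective (eHom K n) (eHom_inj K n)

lemma hom_rank_le (K : Type) [Field K] (n : ℕ) :
    Module.finrank K ↥(MvPolynomial.homogeneousSubmodule (Fin 2) K n) ≤ n + 1 := by
  have := LinearMap.finrank_le_finrank_of_injective (eHom_inj K n)
  rw [(degreeLTEquiv K (n+1)).finrank_eq, Module.finrank_pi] at this
  simpa using this

theorem stmt10_aux (K : Type) [Field K] [IsAlgClosed K] (m : ℕ)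
    (Z : Submodule K (MvPolynomial (Fin 2) K))
    (hproper : Z < MvPolynomial.homogeneousSubmodule (Fin 2) K m)
    (hbp : ¬ ∃ α : Fin 2 → K, α ≠ 0 ∧ ∀ f ∈ Z, MvPolynomial.eval α f = 0) :
    Module.finrank K Z + 2 ≤
      Module.finrank K (Submodule.span K
        {p : MvPolynomial (Fin 2) K | ∃ L f, L.IsHomogeneous 1 ∧ f ∈ Z ∧ p = L * f}) := by
  push_neg at hbp
  have hZle : Z ≤ MvPolynomial.homogeneousSubmodule (Fin 2) K m := hproper.le
  have hhom : ∀ f ∈ Z, MvPolynomial.IsHomogeneous f m := fun f hf => hom_mem (hZle hf)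
  set ψ := (phi K).toLinearMap with hψ
  set U := Z.map ψ with hU
  -- finrank U = finrank Z
  have hrkU : Module.finrank K U = Module.finrank K Z := by
    set e : Z →ₗ[K] K[X] := ψ ∘ₗ Z.subtype with he
    have hinj : Function.Injective e := by
      rw [injective_iff_map_eq_zero]
      intro a ha
      exact Subtype.ext (phi_inj (hhom _ a.2) ha)
    have hrange : LinearMap.range e = U := by
      rw [he, LinearMap.range_comp, Submodule.range_subtype]
    rw [← hrange, ← (LinearEquiv.ofInjective e hinj).finrank_eq]
  have hUle : U ≤ degreeLT K (m+1) := by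
    rintro p ⟨f, hf, rfl⟩
    exact mem_degreeLT.2 (phi_degree (hhom f hf))
  haveI : FiniteDimensional K U := Submodule.finiteDimensional_of_le hUle
  -- no base point transfers
  have heval : ∀ c : K, ∃ u ∈ U, Polynomial.eval c u ≠ 0 := by
    intro c
    obtain ⟨f, hf, hne⟩ := hbp ![c, 1] (fun h => one_ne_zero (congrFun h 1))
    exact ⟨ψ f, Submodule.mem_map_of_mem hf, by rw [show (ψ f : K[X]) = phi K f from rfl, phi_eval]; exact hne⟩
  have hdeg : ∃ v ∈ U, v.degree = (m : WithBot ℕ) := by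
    obtain ⟨f, hf, hne⟩ := hbp ![1, 0] (fun h => one_ne_zero (congrFun h 0))
    refine ⟨ψ f, Submodule.mem_map_of_mem hf, ?_⟩
    show (phi K f).degree = (m : WithBot ℕ)
    have hc : (phi K f).coeff m ≠ 0 := by rw [phi_coeff_top (hhom f hf)]; exact hne
    have h1 : (m : WithBot ℕ) ≤ (phi K f).degree := le_degree_of_ne_zero hc
    have h2 : (phi K f).degree < ((m+1 : ℕ) : WithBot ℕ) := phi_degree (hhom f hf)
    have h0 : phi K f ≠ 0 := fun h => hc (by simp [h])
    rw [degree_eq_natDegree h0] at h1 h2 ⊢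
    have ha : (phi K f).natDegree < m + 1 := by exact_mod_cast h2
    have hb : m ≤ (phi K f).natDegree := by exact_mod_cast h1
    exact_mod_cast (by omega : (phi K f).natDegree = m)
  -- d ≤ m
  have hdm : Module.finrank K U ≤ m := by
    have h1 : Module.finrank K Z < Module.finrank K (MvPolynomial.homogeneousSubmodule (Fin 2) K m) :=
      Submodule.finrank_lt_finrank_of_lt hproper
    have h2 := hom_rank_le K m
    omega
  -- the span W
  set W := Submodule.span K
      {p : MvPolynomial (Fin 2) K | ∃ L f, L.IsHomogeneous 1 ∧ f ∈ Z ∧ p = L * f} with hWdef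
  have hWle : W ≤ MvPolynomial.homogeneousSubmodule (Fin 2) K (m+1) := by
    rw [hWdef, Submodule.span_le]
    rintro p ⟨L, f, hL, hf, rfl⟩
    exact (MvPolynomial.mem_homogeneousSubmodule _ _).2 (by
      have := hL.mul (hhom f hf)
      rwa [add_comm] at this)
  haveI : FiniteDimensional K W := Submodule.finiteDimensional_of_le hWle
  have hsub : U ⊔ U.map (LinearMap.mulLeft K (Polynomial.X : K[X])) ≤ W.map ψ := by
    refine sup_le ?_ ?_
    · rintro p ⟨f, hf, rfl⟩
      refine ⟨MvPolynomial.X 1 * f, Submodule.subset_span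
        ⟨MvPolynomial.X 1, f, MvPolynomial.isHomogeneous_X _ _, hf, rfl⟩, ?_⟩
      show phi K (MvPolynomial.X 1 * f) = phi K f
      rw [map_mul, MvPolynomial.aeval_X]
      simp
    · rintro p ⟨u, ⟨f, hf, rfl⟩, rfl⟩
      refine ⟨MvPolynomial.X 0 * f, Submodule.subset_span
        ⟨MvPolynomial.X 0, f, MvPolynomial.isHomogeneous_X _ _, hf, rfl⟩, ?_⟩
      show phi K (MvPolynomial.X 0 * f) = Polynomial.X * phi K f
      rw [map_mul, MvPolynomial.aeval_X]
      simp
  haveI : FiniteDimensional K ↥(W.map ψ) := Module.Finite.map W ψ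
  have hchain : Module.finrank K U + 2 ≤ Module.finrank K ↥(W.map ψ) :=
    le_trans (uni m U hUle hdm hdeg heval) (Submodule.finrank_mono hsub)
  have hlast : Module.finrank K ↥(W.map ψ) ≤ Module.finrank K W := Submodule.finrank_map_le ψ W
  omega

end Stmt10Aux

open MvPolynomial Finset

noncomputable section

/-- If `Z` is a proper subspace of `S_m` with no base points in `ℙ¹`, then
`dim (S₁·Z) ≥ dim Z + 2`. -/
theorem stmt10 (K : Type) [Field K] [IsAlgClosed K] [CharZero K] (m : ℕ)
    (Z : Submodule K (MvPolynomial (Fin 2) K))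
    (hproper : Z < homogeneousSubmodule (Fin 2) K m)
    (hbp : ¬ ∃ α : Fin 2 → K, α ≠ 0 ∧ ∀ f ∈ Z, eval α f = 0) :
    Module.finrank K Z + 2 ≤
      Module.finrank K (Submodule.span K
        {p : MvPolynomial (Fin 2) K | ∃ L f, L.IsHomogeneous 1 ∧ f ∈ Z ∧ p = L * f}) := by
  exact stmt10_aux K m Z hproper hbp
end
end

section
/- Let Z ⊆ S_m be a linear subspace of codimension c with no base points in P^1. Then S_c · Z = S_{m+c}, i.e., the span of products of elements of Z with forms of degree c is all of S_{m+c}. -/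
open MvPolynomial Finset

noncomputable section

/-!
Dehomogenizing by `x₀ ↦ X`, `x₁ ↦ 1` identifies `S_n` with the space `P_n` of polynomials of
degree `≤ n` and turns `S_c · Z` into `P_c · Y`, where `Y` is the image of `Z`. A base point
`[a : 1]` is a common root of `Y`, and `[1 : 0]` is a base point iff no element of `Y` has degree
`m`. Since `P_{c+1} · Y = P_c · (P_1 · Y)` and `P_1 · Y = Y + X Y` again has no base points,
induction on `c` reduces the claim to: if `Y ⊊ P_m` has no base points, then
`dim (Y + X Y) ≥ dim Y + 2`. Otherwise `D = {p ∈ Y | X p ∈ Y}` has codimension one in `Y` (a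
nonzero finite-dimensional `Y` is not `X`-stable) and `D + X D ⊆ Y`, so by induction on the
dimension `Y = g · P_d`. A root of a nonconstant `g` is a common root of `Y`, while a constant
`g` leaves `Y` without elements of degree `m`.
-/

open scoped Polynomial Pointwise

namespace Submodule

section

variable {R M N : Type*} [Semiring R] [AddCommMonoid M] [AddCommMonoid N] [Module R M] [Module R N]

theorem eq_of_le_of_map_eq_of_injOn {f : M →ₗ[R] N} {S W : Submodule R M}
    (hSW : S ≤ W) (hf : Set.InjOn f W) (h : S.map f = W.map f) : S = W := by
  refine le_antisymm hSW fun w hw => ?_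
  obtain ⟨s, hs, hsw⟩ : f w ∈ S.map f := h ▸ mem_map_of_mem hw
  exact hf (hSW hs) hw hsw ▸ hs

theorem finrank_map_of_injOn {f : M →ₗ[R] N} {S : Submodule R M} (hf : Set.InjOn f S) :
    Module.finrank R (S.map f) = Module.finrank R S :=
  (LinearEquiv.ofBijective (f.submoduleMap S)
    ⟨f.submoduleMap_injective_of_injOn hf, f.submoduleMap_surjective S⟩).finrank_eq.symm

end

theorem finrank_smul_of_ne_zero {K A : Type*} [Field K] [Ring A] [IsDomain A] [Algebra K A]
    {g : A} (hg : g ≠ 0) (M : Submodule K A) :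
    Module.finrank K ↥(g • M) = Module.finrank K M :=
  (equivMapOfInjective (LinearMap.mulLeft K g) (mul_right_injective₀ hg) M).finrank_eq.symm

end Submodule

namespace Polynomial

open Module Submodule

section CommSemiring

variable {R : Type*} [CommSemiring R]

theorem degreeLE_zero_eq_one : degreeLE R 0 = 1 := by
  classical
  rw [← Nat.cast_zero, degreeLE_eq_span_X_pow, one_eq_span]
  simp

theorem X_pow_mem_degreeLE {i n : ℕ} (h : i ≤ n) : (X : R[X]) ^ i ∈ degreeLE R n :=
  mem_degreeLE.2 ((degree_X_pow_le i).trans (by exact_mod_cast h))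

theorem degreeLE_mul_degreeLE (a b : ℕ) :
    degreeLE R a * degreeLE R b = degreeLE R ↑(a + b) := by
  classical
  refine le_antisymm (mul_le.2 fun p hp q hq => ?_) ?_
  · rw [mem_degreeLE] at hp hq ⊢
    exact (degree_mul_le p q).trans (by push_cast; exact add_le_add hp hq)
  · rw [degreeLE_eq_span_X_pow, span_le]
    simp only [coe_image, coe_range, Set.image_subset_iff]
    intro k hk
    rw [Set.mem_preimage, ← pow_mul_pow_sub X (min_le_left k a)]
    exact mul_mem_mul (X_pow_mem_degreeLE (min_le_right k a))
      (X_pow_mem_degreeLE (by simp at hk; omega))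

theorem degreeLE_one_mul (Y : Submodule R R[X]) : degreeLE R 1 * Y = Y ⊔ (X : R[X]) • Y := by
  classical
  rw [← Nat.cast_one, degreeLE_eq_span_X_pow]
  simp [Finset.range_add_one, span_insert, Submodule.sup_mul, ← one_eq_span, span_singleton_mul,
    sup_comm]

theorem eq_bot_of_X_smul_le {N : ℕ} {Y : Submodule R R[X]} (hYN : Y ≤ degreeLE R N)
    (hX : (X : R[X]) • Y ≤ Y) : Y = ⊥ := by
  refine (Submodule.eq_bot_iff Y).2 fun p hp => ?_
  have hXp (k : ℕ) : X ^ k * p ∈ Y := by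
    induction k with
    | zero => simpa using hp
    | succ k ih => simpa [pow_succ', mul_assoc] using hX (smul_mem_pointwise_smul _ X Y ih)
  by_contra hp0
  refine leadingCoeff_ne_zero.2 hp0 ?_
  rw [← coeff_natDegree, ← coeff_X_pow_mul p (N + 1)]
  refine coeff_eq_zero_of_degree_lt ((mem_degreeLE.1 (hYN (hXp (N + 1)))).trans_lt ?_)
  exact_mod_cast (by omega : N < p.natDegree + (N + 1))

end CommSemiring

section Field

variable {K : Type*} [Field K]

instance (n : ℕ) : FiniteDimensional K (degreeLE K n) := by
  rw [← degreeLT_succ_eq_degreeLE]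
  exact Module.Finite.equiv (degreeLTEquiv K (n + 1)).symm

theorem finrank_degreeLE (n : ℕ) : finrank K (degreeLE K n) = n + 1 := by
  rw [← degreeLT_succ_eq_degreeLE, (degreeLTEquiv K (n + 1)).finrank_eq, finrank_fin_fun]

theorem exists_eq_smul_degreeLE_of_finrank_degreeLE_one_mul_le {N : ℕ} (d : ℕ)
    {Y : Submodule K K[X]} (hYN : Y ≤ degreeLE K N) (hY : finrank K Y = d + 1)
    (hXY : finrank K ↥(degreeLE K 1 * Y) ≤ d + 2) :
    ∃ g : K[X], g ≠ 0 ∧ Y = g • degreeLE K d := by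
  induction d generalizing Y with
  | zero =>
    have := finiteDimensional_of_le hYN
    obtain ⟨g, hgY, hg⟩ := exists_mem_ne_zero_of_ne_bot (Submodule.one_le_finrank_iff.1 hY.ge)
    have hgY : span K {g} = Y :=
      eq_of_le_of_finrank_le ((span_singleton_le_iff_mem g Y).2 hgY)
        (by rw [hY, finrank_span_singleton hg])
    refine ⟨g, hg, ?_⟩
    rw [Nat.cast_zero, degreeLE_zero_eq_one, ← span_singleton_mul, mul_one, hgY]
  | succ d ih =>
    have := finiteDimensional_of_le hYN
    set D := Y ⊓ Y.comap (LinearMap.mulLeft K X)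
    have hXD : (X : K[X]) • D = Y ⊓ (X : K[X]) • Y := by
      ext p
      simp only [mem_smul_pointwise_iff_exists, Submodule.mem_inf, mem_comap, D,
        LinearMap.mulLeft_apply, smul_eq_mul]
      constructor
      · rintro ⟨q, ⟨hq, hXq⟩, rfl⟩
        exact ⟨hXq, q, hq, rfl⟩
      · rintro ⟨hp, q, hq, rfl⟩
        exact ⟨q, ⟨hq, hp⟩, rfl⟩
    have hDY : degreeLE K 1 * D ≤ Y := by
      rw [degreeLE_one_mul, hXD]
      exact sup_le inf_le_left inf_le_left
    have hD : finrank K D = d + 1 := by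
      have : FiniteDimensional K ↥((X : K[X]) • Y) := Module.Finite.map Y _
      have hsum := finrank_sup_add_finrank_inf_eq Y ((X : K[X]) • Y)
      rw [← degreeLE_one_mul, ← hXD, finrank_smul_of_ne_zero X_ne_zero,
        finrank_smul_of_ne_zero X_ne_zero] at hsum
      have hDY : D < Y := by
        refine lt_of_le_of_ne inf_le_left fun hDY => ?_
        have hXY : (X : K[X]) • Y ≤ Y :=
          calc (X : K[X]) • Y = X • D := by rw [hDY]
            _ ≤ Y := hXD ▸ inf_le_left
        have hY0 := eq_bot_of_X_smul_le hYN hXY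
        rw [hY0, finrank_bot] at hY
        omega
      have := finrank_lt_finrank_of_lt hDY
      omega
    obtain ⟨g, hg, hgD⟩ := ih (inf_le_left.trans hYN) hD ((finrank_mono hDY).trans hY.le)
    have hle : g • degreeLE K ↑(d + 1) ≤ Y := by
      calc g • degreeLE K ↑(d + 1) = degreeLE K 1 * (g • degreeLE K d) := by
            rw [← span_singleton_mul, ← span_singleton_mul, mul_left_comm,
              ← Nat.cast_one (R := WithBot ℕ), degreeLE_mul_degreeLE, add_comm]
        _ ≤ Y := hgD ▸ hDY
    refine ⟨g, hg, (eq_of_le_of_finrank_le hle ?_).symm⟩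
    rw [finrank_smul_of_ne_zero hg, finrank_degreeLE, hY]

end Field

section IsAlgClosed

variable {K : Type*} [Field K] [IsAlgClosed K]

theorem finrank_add_two_le_finrank_degreeLE_one_mul {m : ℕ} {Y : Submodule K K[X]}
    (hYm : Y ≤ degreeLE K m) (hroot : ∀ a : K, ∃ p ∈ Y, p.eval a ≠ 0)
    (hcoeff : ∃ p ∈ Y, p.coeff m ≠ 0) (hY : finrank K Y ≤ m) :
    finrank K Y + 2 ≤ finrank K ↥(degreeLE K 1 * Y) := by
  by_contra! hXY
  obtain ⟨p, hpY, hpm⟩ := hcoeff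
  have : FiniteDimensional K Y := finiteDimensional_of_le hYm
  obtain ⟨d, hd⟩ : ∃ d, finrank K Y = d + 1 := by
    refine Nat.exists_eq_succ_of_ne_zero fun hY0 => hpm ?_
    rw [Submodule.finrank_eq_zero.1 hY0, mem_bot] at hpY
    rw [hpY, coeff_zero]
  obtain ⟨g, hg, hYg⟩ := exists_eq_smul_degreeLE_of_finrank_degreeLE_one_mul_le d hYm hd
    (by omega)
  rw [hYg] at hpY hroot
  obtain ⟨q, hq, rfl⟩ := (mem_smul_pointwise_iff_exists _ _ _).1 hpY
  have hgdeg : g.degree ≠ 0 := by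
    have hmq := le_natDegree_of_ne_zero hpm
    have hqd := natDegree_le_iff_degree_le.2 (mem_degreeLE.1 hq)
    have := (natDegree_mul_le (p := g) (q := q)).trans (Nat.add_le_add_left hqd _)
    exact (natDegree_pos_iff_degree_pos.1 (by rw [smul_eq_mul] at hmq; omega)).ne'
  obtain ⟨a, ha⟩ := IsAlgClosed.exists_root g hgdeg
  obtain ⟨_, hr, hra⟩ := hroot a
  obtain ⟨r, -, rfl⟩ := (mem_smul_pointwise_iff_exists _ _ _).1 hr
  exact hra (by rw [smul_eq_mul, eval_mul, ha.eq_zero, zero_mul])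

theorem degreeLE_mul_eq_degreeLE (c : ℕ) {m : ℕ} {Y : Submodule K K[X]}
    (hYm : Y ≤ degreeLE K m) (hroot : ∀ a : K, ∃ p ∈ Y, p.eval a ≠ 0)
    (hcoeff : ∃ p ∈ Y, p.coeff m ≠ 0) (hcodim : m + 1 ≤ finrank K Y + c) :
    degreeLE K c * Y = degreeLE K ↑(c + m) := by
  induction c generalizing m Y with
  | zero =>
    rw [Nat.cast_zero, degreeLE_zero_eq_one, one_mul, zero_add]
    exact eq_of_le_of_finrank_le hYm (by rw [finrank_degreeLE]; omega)
  | succ c ih =>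
    by_cases hY : finrank K Y ≤ m
    · have hY1 : Y ≤ degreeLE K 1 * Y := degreeLE_one_mul Y ▸ le_sup_left
      have hY1m : degreeLE K 1 * Y ≤ degreeLE K ↑(m + 1) := by
        rw [add_comm, ← degreeLE_mul_degreeLE, Nat.cast_one]
        exact mul_le_mul_right hYm _
      obtain ⟨p, hpY, hpm⟩ := hcoeff
      have := ih hY1m (fun a => (hroot a).imp fun p hp => ⟨hY1 hp.1, hp.2⟩)
        ⟨X * p, mul_mem_mul (mem_degreeLE.2 degree_X_le) hpY, by rwa [coeff_X_mul]⟩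
        (by have := finrank_add_two_le_finrank_degreeLE_one_mul hYm hroot ⟨p, hpY, hpm⟩ hY
            omega)
      rw [← degreeLE_mul_degreeLE, Nat.cast_one, mul_assoc, this]
      congr 2
      omega
    · have hYeq : Y = degreeLE K m :=
        eq_of_le_of_finrank_le hYm (by rw [finrank_degreeLE]; omega)
      rw [hYeq, degreeLE_mul_degreeLE]

end IsAlgClosed

section Dehomogenization

variable {R : Type*} [CommSemiring R]

theorem natDegree_aeval_X_one_le_of_isHomogeneous {f : MvPolynomial (Fin 2) R} {n : ℕ}
    (hf : f.IsHomogeneous n) : (MvPolynomial.aeval ![(X : R[X]), 1] f).natDegree ≤ n := by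
  rw [f.as_sum, map_sum]
  refine natDegree_sum_le_of_forall_le _ _ fun d hd => ?_
  have hdn : d.degree = n := by
    rw [Finsupp.degree_eq_weight_one]; exact hf (MvPolynomial.mem_support_iff.1 hd)
  rw [MvPolynomial.aeval_monomial, Finsupp.prod_fintype _ _ (by simp), Fin.prod_univ_two]
  simp only [Matrix.cons_val_zero, Matrix.cons_val_one, one_pow, mul_one,
    ← C_eq_algebraMap]
  exact natDegree_C_mul_X_pow_le _ _ |>.trans (hdn ▸ Finsupp.le_degree 0 d)

theorem map_aeval_X_one_homogeneousSubmodule (n : ℕ) :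
    (homogeneousSubmodule (Fin 2) R n).map (MvPolynomial.aeval ![(X : R[X]), 1]).toLinearMap =
      degreeLE R n := by
  ext p
  simp only [Submodule.mem_map, mem_homogeneousSubmodule, AlgHom.toLinearMap_apply, mem_degreeLE,
    ← natDegree_le_iff_degree_le]
  constructor
  · rintro ⟨f, hf, rfl⟩
    exact natDegree_aeval_X_one_le_of_isHomogeneous hf
  · exact fun hp => ⟨p.homogenize n, isHomogeneous_homogenize p, aeval_homogenize_X_one p hp⟩

theorem injOn_aeval_X_one_homogeneousSubmodule (n : ℕ) :
    Set.InjOn (MvPolynomial.aeval ![(X : R[X]), 1])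
      (homogeneousSubmodule (Fin 2) R n : Set (MvPolynomial (Fin 2) R)) :=
  fun f hf g hg hfg => by
    rw [← homogenize_eq_of_isHomogeneous hf rfl, ← homogenize_eq_of_isHomogeneous hg rfl, hfg]

theorem eval_aeval_X_one (a : R) (f : MvPolynomial (Fin 2) R) :
    (MvPolynomial.aeval ![(X : R[X]), 1] f).eval a = MvPolynomial.eval ![a, 1] f := by
  induction f using MvPolynomial.induction_on with
  | C r => simp
  | add p q hp hq => simp [hp, hq]
  | mul_X p i hp => fin_cases i <;> simp [hp]

theorem coeff_aeval_X_one_of_isHomogeneous {f : MvPolynomial (Fin 2) R} {n : ℕ}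
    (hf : f.IsHomogeneous n) :
    (MvPolynomial.aeval ![(X : R[X]), 1] f).coeff n = MvPolynomial.eval ![1, 0] f := by
  conv_rhs => rw [← homogenize_eq_of_isHomogeneous hf rfl]
  rw [homogenize, map_sum, Finset.sum_eq_single (n, 0)]
  · simp [MvPolynomial.eval_monomial]
  · rintro ⟨k, l⟩ hkl hne
    have hl : l ≠ 0 := by rintro rfl; simp_all
    simp [MvPolynomial.eval_monomial, hl]
  · simp

end Dehomogenization

end Polynomial

theorem MvPolynomial.span_isHomogeneous_mul_eq {σ R : Type*} [CommSemiring R] (c : ℕ)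
    (Z : Submodule R (MvPolynomial σ R)) :
    Submodule.span R {p | ∃ g f, IsHomogeneous g c ∧ f ∈ Z ∧ p = g * f} =
      homogeneousSubmodule σ R c * Z := by
  rw [Submodule.mul_eq_span_mul_set]
  congr 1
  ext p
  simp [Set.mem_mul, eq_comm]

theorem stmt11_general (K : Type) [Field K] [IsAlgClosed K] (m c : ℕ)
    (Z : Submodule K (MvPolynomial (Fin 2) K))
    (hZ : Z ≤ homogeneousSubmodule (Fin 2) K m)
    (hbp : ¬ ∃ α : Fin 2 → K, α ≠ 0 ∧ ∀ f ∈ Z, eval α f = 0)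
    (hcodim : Module.finrank K Z + c = m + 1) :
    Submodule.span K
        {p : MvPolynomial (Fin 2) K | ∃ g f, g.IsHomogeneous c ∧ f ∈ Z ∧ p = g * f} =
      homogeneousSubmodule (Fin 2) K (m + c) := by
  set ρ : MvPolynomial (Fin 2) K →ₐ[K] K[X] := MvPolynomial.aeval ![Polynomial.X, 1]
  set Y := Z.map ρ.toLinearMap
  push Not at hbp
  have hY : Y ≤ Polynomial.degreeLE K m :=
    Polynomial.map_aeval_X_one_homogeneousSubmodule (R := K) m ▸ Submodule.map_mono hZ
  have hroot (a : K) : ∃ p ∈ Y, p.eval a ≠ 0 := by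
    obtain ⟨f, hf, hfa⟩ := hbp ![a, 1] (by simp)
    exact ⟨ρ f, Submodule.mem_map_of_mem hf, by rwa [Polynomial.eval_aeval_X_one]⟩
  have hcoeff : ∃ p ∈ Y, p.coeff m ≠ 0 := by
    obtain ⟨f, hf, hf10⟩ := hbp ![1, 0] (by simp)
    refine ⟨ρ f, Submodule.mem_map_of_mem hf, ?_⟩
    rwa [Polynomial.coeff_aeval_X_one_of_isHomogeneous (hZ hf)]
  have hrank : Module.finrank K Y = Module.finrank K Z :=
    Submodule.finrank_map_of_injOn ((Polynomial.injOn_aeval_X_one_homogeneousSubmodule m).mono hZ)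
  rw [MvPolynomial.span_isHomogeneous_mul_eq]
  refine Submodule.eq_of_le_of_map_eq_of_injOn (f := ρ.toLinearMap) ?_
    (Polynomial.injOn_aeval_X_one_homogeneousSubmodule (m + c)) ?_
  · calc homogeneousSubmodule (Fin 2) K c * Z
        ≤ homogeneousSubmodule (Fin 2) K c * homogeneousSubmodule (Fin 2) K m :=
          mul_le_mul_right hZ _
      _ ≤ homogeneousSubmodule (Fin 2) K (m + c) := add_comm c m ▸ homogeneousSubmodule_mul c m
  · rw [Submodule.map_mul, Polynomial.map_aeval_X_one_homogeneousSubmodule,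
      Polynomial.map_aeval_X_one_homogeneousSubmodule,
      Polynomial.degreeLE_mul_eq_degreeLE c hY hroot hcoeff (by omega), add_comm]

/-- If `Z ⊆ S_m` has codimension `c` and no base points in `ℙ¹`, then `S_c · Z = S_{m+c}`. -/
theorem stmt11 (K : Type) [Field K] [IsAlgClosed K] [CharZero K] (m c : ℕ)
    (Z : Submodule K (MvPolynomial (Fin 2) K))
    (hZ : Z ≤ homogeneousSubmodule (Fin 2) K m)
    (hbp : ¬ ∃ α : Fin 2 → K, α ≠ 0 ∧ ∀ f ∈ Z, eval α f = 0)
    (hcodim : Module.finrank K Z + c = m + 1) :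
    Submodule.span K
        {p : MvPolynomial (Fin 2) K | ∃ g f, g.IsHomogeneous c ∧ f ∈ Z ∧ p = g * f} =
      homogeneousSubmodule (Fin 2) K (m + c) :=
  stmt11_general K m c Z hZ hbp hcodim
end
end

section
/- If a binary form q of degree d lies on a tangent line to the Veronese curve but not on the curve itself — concretely, if q = x^{d−1} y (up to change of coordinates) — then the Waring rank of q equals d. -/
open MvPolynomial Finset

noncomputable section

/-!
Upper bound: for a primitive `d`-th root of unity `ζ`, averaging `ζ^{-j} (x + ζ^j y)^d` over `j`
kills every binomial term except the one linear in `y`, so `∑ⱼ ζ^{-j} (x + ζ^j y)^d = d² x^{d-1} y`;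
over an algebraically closed field each coefficient is absorbed into the `d`-th power.

Lower bound: dehomogenizing at `x = 1`, a decomposition into `r < d` powers gives
`t = ∑ᵢ (aᵢ + bᵢ t)^d`, and after differentiating, `1 = ∑ᵢ d bᵢ (aᵢ + bᵢ t)^{d-1}`, a sum over
at most `d - 1` indices with `bᵢ ≠ 0`. The differential operator dual to a linear form kills its
own power, maps every other power to a multiple of a power of the same linear form, and maps a
nonzero constant to a nonzero constant; applying one such operator per term yields `c = 0` for
some `c ≠ 0`.
-/

theorem IsPrimitiveRoot.sum_range_pow_pow {R : Type*} [CommRing R] [IsDomain R] {ζ : R} {d : ℕ}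
    (hζ : IsPrimitiveRoot ζ d) (e : ℕ) :
    ∑ j ∈ range d, (ζ ^ e) ^ j = if d ∣ e then (d : R) else 0 := by
  split_ifs with h
  · simp [(hζ.pow_eq_one_iff_dvd e).mpr h]
  · refine eq_zero_of_ne_zero_of_mul_right_eq_zero
      (sub_ne_zero_of_ne (mt (hζ.pow_eq_one_iff_dvd e).mp h)) ?_
    rw [geom_sum_mul, ← pow_mul, mul_comm, pow_mul, hζ.pow_eq_one, one_pow, sub_self]

theorem IsPrimitiveRoot.sum_pow_mul_add_pow {R : Type*} [CommRing R] [IsDomain R] {ζ : R}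
    {d : ℕ} (hζ : IsPrimitiveRoot ζ d) (hd : 2 ≤ d) (x y : R) :
    ∑ j ∈ range d, ζ ^ (j * (d - 1)) * (ζ ^ j * y + x) ^ d = (d : R) ^ 2 * x ^ (d - 1) * y := by
  have hterm : ∀ j k, ζ ^ (j * (d - 1)) * ((ζ ^ j * y) ^ k * x ^ (d - k) * d.choose k)
      = (ζ ^ (d - 1 + k)) ^ j * (y ^ k * x ^ (d - k) * d.choose k) := fun j k => by ring
  simp_rw [add_pow, mul_sum, hterm]
  rw [sum_comm]
  simp_rw [← sum_mul, hζ.sum_range_pow_pow]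
  rw [sum_eq_single_of_mem 1 (by rw [mem_range]; omega)]
  · simp only [Nat.sub_add_cancel (by omega : 1 ≤ d), dvd_refl, if_true, pow_one,
      Nat.choose_one_right]
    ring
  · intro k hk hk1
    rw [if_neg, zero_mul]
    intro hdvd
    have := Nat.eq_of_dvd_of_lt_two_mul (by omega) hdvd (by rw [mem_range] at hk; omega)
    omega

theorem linForm_smul (K : Type) [Field K] (μ : K) (v : Fin 2 → K) :
    linForm K (μ • v) = C μ * linForm K v := by
  simp only [linForm, Pi.smul_apply, smul_eq_mul, C_mul]
  ring

theorem exists_sum_pow_eq_sum_C_mul_pow (K : Type) [Field K] [IsAlgClosed K] {d r : ℕ}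
    (hd : d ≠ 0) (c : Fin r → K) (v : Fin r → Fin 2 → K) :
    ∃ w : Fin r → Fin 2 → K, ∑ i, C (c i) * linForm K (v i) ^ d = ∑ i, linForm K (w i) ^ d := by
  choose μ hμ using fun i => IsAlgClosed.exists_pow_nat_eq (c i) (Nat.pos_of_ne_zero hd)
  exact ⟨fun i => μ i • v i, by simp_rw [linForm_smul, mul_pow, ← C_pow, hμ]⟩

theorem exists_X_pow_mul_X_eq_sum_pow (K : Type) [Field K] [IsAlgClosed K] [CharZero K] {d : ℕ}
    (hd : 2 ≤ d) :
    ∃ L : Fin d → Fin 2 → K, (X 0 : MvPolynomial (Fin 2) K) ^ (d - 1) * X 1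
      = ∑ i, linForm K (L i) ^ d := by
  have : NeZero (d : K) := ⟨Nat.cast_ne_zero.mpr (by omega)⟩
  obtain ⟨ζ, hζ⟩ := HasEnoughRootsOfUnity.exists_primitiveRoot K d
  have hsum := (hζ.map_of_injective (C_injective (Fin 2) K)).sum_pow_mul_add_pow hd (X 0) (X 1)
  rw [← Fin.sum_univ_eq_sum_range (fun j => C ζ ^ (j * (d - 1)) * _)] at hsum
  obtain ⟨L, hL⟩ := exists_sum_pow_eq_sum_C_mul_pow K (d := d) (by omega)
    (fun j => ζ ^ ((j : ℕ) * (d - 1)) / (d : K) ^ 2) (fun j => ![1, ζ ^ (j : ℕ)])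
  have hd2 : (d : K) ^ 2 ≠ 0 := pow_ne_zero 2 (NeZero.ne _)
  have hlin : ∀ j : ℕ, linForm K ![1, ζ ^ j] = C ζ ^ j * X 1 + X 0 := fun j => by
    simp [linForm, add_comm]
  refine ⟨L, ?_⟩
  calc (X 0 : MvPolynomial (Fin 2) K) ^ (d - 1) * X 1
      = C ((d : K) ^ 2)⁻¹ * (C ((d : K) ^ 2) * X 0 ^ (d - 1) * X 1) := by
        rw [← mul_assoc, ← mul_assoc, ← C_mul, inv_mul_cancel₀ hd2, C_1, one_mul]
    _ = ∑ j : Fin d, C (ζ ^ ((j : ℕ) * (d - 1)) / (d : K) ^ 2) * linForm K ![1, ζ ^ (j : ℕ)] ^ d := by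
        simp only [← hsum, map_pow, map_natCast, mul_sum, hlin, div_eq_inv_mul, C_mul, mul_assoc]
    _ = ∑ i, linForm K (L i) ^ d := hL

section Apolarity

open Polynomial (derivative)

variable {K : Type*} [Field K]

/-- The operator `a ∂_y - b ∂_x` on forms of degree `n`, dehomogenized at `x = 1`;
it annihilates `(a x + b y)^n`. -/
def annihilatorOp (n : ℕ) (a b : K) : Polynomial K →ₗ[K] Polynomial K :=
  LinearMap.mulLeft K (Polynomial.C a + Polynomial.C b * Polynomial.X) ∘ₗ derivative
    - (n * b) • LinearMap.id

theorem annihilatorOp_C (n : ℕ) (a b e : K) :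
    annihilatorOp n a b (Polynomial.C e) = Polynomial.C (-(n * b * e)) := by
  simp [annihilatorOp, Polynomial.smul_eq_C_mul]

theorem annihilatorOp_linear_pow (n : ℕ) (a b a' b' : K) :
    annihilatorOp n a b ((Polynomial.C a' + Polynomial.C b' * Polynomial.X) ^ n)
      = Polynomial.C (n * (a * b' - b * a'))
        * (Polynomial.C a' + Polynomial.C b' * Polynomial.X) ^ (n - 1) := by
  cases n with
  | zero => simp [annihilatorOp]
  | succ n =>
    have hp : derivative (Polynomial.C a' + Polynomial.C b' * Polynomial.X) = Polynomial.C b' := by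
      simp
    simp only [annihilatorOp, LinearMap.sub_apply, LinearMap.comp_apply, LinearMap.mulLeft_apply,
      LinearMap.smul_apply, LinearMap.id_apply, Polynomial.derivative_pow_succ, hp,
      Polynomial.smul_eq_C_mul, Nat.add_sub_cancel, map_mul, map_sub, map_natCast, Nat.cast_succ,
      map_add, map_one]
    rw [pow_succ]
    ring

/-- Homogenized: in degree `n`, `x^n` is not a combination of at most `n` powers `(aᵢ x + bᵢ y)^n`
with `bᵢ ≠ 0`. -/
theorem eq_zero_of_sum_smul_linear_pow_eq_C [CharZero K] {ι : Type*} (s : Finset ι)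
    (a b : ι → K) (hb : ∀ i ∈ s, b i ≠ 0) {n : ℕ} (hn : s.card ≤ n) (c : ι → K) {e : K}
    (h : ∑ i ∈ s, c i • (Polynomial.C (a i) + Polynomial.C (b i) * Polynomial.X) ^ n
      = Polynomial.C e) :
    e = 0 := by
  classical
  induction s using Finset.induction_on generalizing n c e with
  | empty => simpa using h.symm
  | insert j s hj ih =>
    rw [card_insert_of_notMem hj] at hn
    have hbj := hb j (mem_insert_self j s)
    have key : ∑ i ∈ s, (c i * (n * (a j * b i - b j * a i))) •
        (Polynomial.C (a i) + Polynomial.C (b i) * Polynomial.X) ^ (n - 1)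
        = Polynomial.C (-(n * b j * e)) := by
      rw [← annihilatorOp_C n (a j), ← h, sum_insert hj, map_add, map_smul,
        annihilatorOp_linear_pow, mul_comm (a j) (b j), sub_self, mul_zero, Polynomial.C_0,
        zero_mul, smul_zero, zero_add, map_sum]
      refine sum_congr rfl fun i _ => ?_
      rw [map_smul, annihilatorOp_linear_pow, mul_smul, Polynomial.smul_eq_C_mul ((n : K) * _)]
    have := ih (fun i hi => hb i (mem_insert_of_mem hi)) (by omega) _ key
    simpa [hbj, Nat.pos_iff_ne_zero.mp (by omega : 0 < n)] using this

end Apolarity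

theorem le_of_X_pow_mul_X_eq_sum_pow (K : Type) [Field K] [CharZero K] {d r : ℕ}
    (L : Fin r → Fin 2 → K)
    (h : (X 0 : MvPolynomial (Fin 2) K) ^ (d - 1) * X 1 = ∑ i, linForm K (L i) ^ d) :
    d ≤ r := by
  classical
  by_contra! hrd
  have hpoly := congrArg (aeval ![(1 : Polynomial K), Polynomial.X]) h
  simp only [map_mul, map_pow, map_sum, aeval_X, linForm, map_add, algHom_C,
    Polynomial.algebraMap_eq, Matrix.cons_val_zero, Matrix.cons_val_one, one_pow, one_mul,
    mul_one] at hpoly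
  have hder := congrArg Polynomial.derivative hpoly
  rw [Polynomial.derivative_X, map_sum] at hder
  have hsum : ∑ i ∈ univ.filter (fun i => L i 1 ≠ 0), ((d : K) * L i 1) •
      (Polynomial.C (L i 0) + Polynomial.C (L i 1) * Polynomial.X) ^ (d - 1) = Polynomial.C 1 := by
    rw [sum_filter_of_ne, map_one, hder]
    · refine sum_congr rfl fun i _ => ?_
      simp only [Polynomial.derivative_pow, map_natCast, Polynomial.derivative_add,
        Polynomial.derivative_C, Polynomial.derivative_mul, zero_mul, Polynomial.derivative_X,
        mul_one, zero_add, Polynomial.smul_eq_C_mul, map_mul]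
      ring
    · intro i _ hi hb
      simp [hb] at hi
  have hcard : (univ.filter (fun i => L i 1 ≠ 0)).card ≤ d - 1 :=
    (card_filter_le _ _).trans (by rw [card_univ, Fintype.card_fin]; omega)
  exact one_ne_zero (eq_zero_of_sum_smul_linear_pow_eq_C _ _ _ (fun i hi => (mem_filter.mp hi).2)
    hcard _ hsum)

/-- A form on a tangent line of the Veronese curve but not on the curve, concretely
`x^{d-1}y`, has Waring rank `d`. -/
theorem stmt16 (K : Type) [Field K] [IsAlgClosed K] [CharZero K] (d : ℕ) (hd : 2 ≤ d) :
    waringRank K d ((X 0 : MvPolynomial (Fin 2) K) ^ (d - 1) * X 1) = d := by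
  obtain ⟨L, hL⟩ := exists_X_pow_mul_X_eq_sum_pow K hd
  exact le_antisymm (Nat.sInf_le ⟨L, hL⟩)
    (le_csInf ⟨d, L, hL⟩ fun r ⟨L', hL'⟩ => le_of_X_pow_mul_X_eq_sum_pow K L' hL')
end
end

section
/- Let f ∈ S_{k+1} be the (up to scalar unique) kernel polynomial of the catalecticant of q, i.e., the functional φ dual to q satisfies φ(f·S_{d−k−1}) = 0 with the catalecticant of rank k+1. If f = Π_{i=1}^{k+1} (u_i x − t_i y) has k+1 distinct roots [t_i, u_i] ∈ P^1, then q is a linear combination of (t_1 x + u_1 y)^d, ..., (t_{k+1} x + u_{k+1} y)^d; hence rank(q) ≤ k+1. -/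
open MvPolynomial Finset

noncomputable section

variable {K : Type} [Field K]

lemma pcoeff_zero (r : ℕ) (t u : Fin r → K) (m : ℕ) (hm : r < m) :
    (∏ i, (Polynomial.C (u i) - Polynomial.C (t i) * Polynomial.X)).coeff m = 0 := by
  apply Polynomial.coeff_eq_zero_of_natDegree_lt
  calc (∏ i, (Polynomial.C (u i) - Polynomial.C (t i) * Polynomial.X)).natDegree
      ≤ ∑ i : Fin r, (Polynomial.C (u i) - Polynomial.C (t i) * Polynomial.X).natDegree :=
        Polynomial.natDegree_prod_le _ _
    _ ≤ ∑ _i : Fin r, 1 := by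
        apply Finset.sum_le_sum
        intro i _
        refine (Polynomial.natDegree_sub_le _ _).trans ?_
        simp [Polynomial.natDegree_C]
        refine (Polynomial.natDegree_mul_le).trans ?_
        simp
    _ = r := by simp
    _ < m := hm

lemma coeff_mul_lin (P : Polynomial K) (c₁ c₂ : K) (m : ℕ) :
    (P * (Polynomial.C c₁ - Polynomial.C c₂ * Polynomial.X)).coeff m
      = c₁ * P.coeff m - c₂ * (P * Polynomial.X).coeff m := by
  rw [mul_sub, Polynomial.coeff_sub, Polynomial.coeff_mul_C,
    show P * (Polynomial.C c₂ * Polynomial.X) = Polynomial.C c₂ * (P * Polynomial.X) by ring,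
    Polynomial.coeff_C_mul, mul_comm (P.coeff m) c₁]

lemma Esum (r : ℕ) (t u : Fin r → K) (a b : K) :
    ∑ m ∈ range (r+1),
      (∏ i, (Polynomial.C (u i) - Polynomial.C (t i) * Polynomial.X)).coeff m * a^(r-m) * b^m
      = ∏ i, (u i * a - t i * b) := by
  induction r with
  | zero => simp
  | succ r ih =>
    rw [Fin.prod_univ_castSucc, Fin.prod_univ_castSucc (f := fun i => u i * a - t i * b)]
    set P := ∏ i : Fin r, (Polynomial.C (u i.castSucc) - Polynomial.C (t i.castSucc) * Polynomial.X) with hP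
    have key : ∀ m, (P * (Polynomial.C (u (Fin.last r)) - Polynomial.C (t (Fin.last r)) * Polynomial.X)).coeff m
        = u (Fin.last r) * P.coeff m - t (Fin.last r) * (P * Polynomial.X).coeff m :=
      fun m => coeff_mul_lin _ _ _ _
    calc ∑ m ∈ range (r+1+1),
        (P * (Polynomial.C (u (Fin.last r)) - Polynomial.C (t (Fin.last r)) * Polynomial.X)).coeff m * a^(r+1-m) * b^m
        = ∑ m ∈ range (r+1+1), (u (Fin.last r) * P.coeff m * a^(r+1-m) * b^m
            - t (Fin.last r) * (P * Polynomial.X).coeff m * a^(r+1-m) * b^m) := by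
          apply Finset.sum_congr rfl; intro m _; rw [key]; ring
      _ = (∑ m ∈ range (r+1+1), u (Fin.last r) * P.coeff m * a^(r+1-m) * b^m)
            - ∑ m ∈ range (r+1+1), t (Fin.last r) * (P * Polynomial.X).coeff m * a^(r+1-m) * b^m := by
          rw [Finset.sum_sub_distrib]
      _ = (u (Fin.last r) * a - t (Fin.last r) * b) *
            ∑ m ∈ range (r+1), P.coeff m * a^(r-m) * b^m := by
          have S1 : ∑ m ∈ range (r+1+1), u (Fin.last r) * P.coeff m * a^(r+1-m) * b^m
              = u (Fin.last r) * a * ∑ m ∈ range (r+1), P.coeff m * a^(r-m) * b^m := by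
            rw [Finset.sum_range_succ, pcoeff_zero r _ _ (r+1) (by omega), Finset.mul_sum]
            simp only [mul_zero, zero_mul, add_zero]
            exact Finset.sum_congr rfl fun m hm => by
              have := Finset.mem_range.mp hm
              rw [show r + 1 - m = (r - m) + 1 from by omega, pow_succ]; ring
          have S2 : ∑ m ∈ range (r+1+1), t (Fin.last r) * (P * Polynomial.X).coeff m * a^(r+1-m) * b^m
              = t (Fin.last r) * b * ∑ m ∈ range (r+1), P.coeff m * a^(r-m) * b^m := by
            rw [Finset.sum_range_succ']
            have h0 : (P * Polynomial.X).coeff 0 = 0 := by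
              simp [Polynomial.coeff_mul_X_zero]
            rw [h0, Finset.mul_sum]
            simp only [mul_zero, zero_mul, add_zero]
            exact Finset.sum_congr rfl fun m hm => by
              have := Finset.mem_range.mp hm
              rw [Polynomial.coeff_mul_X,
                show r + 1 - (m+1) = r - m from by omega, pow_succ]
              ring
          rw [S1, S2]; ring
      _ = _ := by rw [ih]; ring

lemma Fsum (r : ℕ) (t u : Fin r → K) :
    (∏ i, (C (u i) * X 0 - C (t i) * X 1) : MvPolynomial (Fin 2) K)
      = ∑ m ∈ range (r+1),
          C ((∏ i, (Polynomial.C (u i) - Polynomial.C (t i) * Polynomial.X)).coeff m)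
            * X 0 ^ (r-m) * X (1 : Fin 2) ^ m := by
  induction r with
  | zero => simp
  | succ r ih =>
    rw [Fin.prod_univ_castSucc
      (f := fun i => (C (u i) * X 0 - C (t i) * X 1 : MvPolynomial (Fin 2) K)),
      Fin.prod_univ_castSucc
      (f := fun i => (Polynomial.C (u i) - Polynomial.C (t i) * Polynomial.X : Polynomial K))]
    rw [ih]
    set P := ∏ i : Fin r, (Polynomial.C (u i.castSucc) - Polynomial.C (t i.castSucc) * Polynomial.X) with hP
    have S1 : ∑ m ∈ range (r+1+1),
        (C (u (Fin.last r) * P.coeff m) * X 0 ^ (r+1-m) * X (1:Fin 2) ^ m : MvPolynomial (Fin 2) K)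
        = (C (u (Fin.last r)) * X 0) * ∑ m ∈ range (r+1), C (P.coeff m) * X 0 ^ (r-m) * X (1:Fin 2) ^ m := by
      rw [Finset.sum_range_succ, pcoeff_zero r _ _ (r+1) (by omega), Finset.mul_sum]
      simp only [mul_zero, map_zero, zero_mul, add_zero]
      exact Finset.sum_congr rfl fun m hm => by
        have := Finset.mem_range.mp hm
        rw [show r + 1 - m = (r - m) + 1 from by omega, pow_succ, map_mul]
        ring
    have S2 : ∑ m ∈ range (r+1+1),
        (C (t (Fin.last r) * (P * Polynomial.X).coeff m) * X 0 ^ (r+1-m) * X (1:Fin 2) ^ m : MvPolynomial (Fin 2) K)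
        = (C (t (Fin.last r)) * X 1) * ∑ m ∈ range (r+1), C (P.coeff m) * X 0 ^ (r-m) * X (1:Fin 2) ^ m := by
      rw [Finset.sum_range_succ']
      have h0 : (P * Polynomial.X).coeff 0 = 0 := by
        simp [Polynomial.coeff_mul_X_zero]
      rw [h0, Finset.mul_sum]
      simp only [mul_zero, map_zero, zero_mul, add_zero]
      exact Finset.sum_congr rfl fun m hm => by
        have := Finset.mem_range.mp hm
        rw [Polynomial.coeff_mul_X,
          show r + 1 - (m+1) = r - m from by omega, pow_succ, map_mul]
        ring
    symm
    have e0 : ∀ m ∈ range (r+1+1),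
        (C ((P * (Polynomial.C (u (Fin.last r)) - Polynomial.C (t (Fin.last r)) * Polynomial.X)).coeff m)
          * X 0 ^ (r+1-m) * X (1:Fin 2) ^ m : MvPolynomial (Fin 2) K)
        = C (u (Fin.last r) * P.coeff m) * X 0 ^ (r+1-m) * X (1:Fin 2) ^ m
          - C (t (Fin.last r) * (P * Polynomial.X).coeff m) * X 0 ^ (r+1-m) * X (1:Fin 2) ^ m := by
      intro m hm
      rw [coeff_mul_lin, map_sub, map_mul, map_mul]
      ring
    rw [Finset.sum_congr rfl e0, Finset.sum_sub_distrib, S1, S2]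
    ring

lemma keyrec (d : ℕ) : ∀ (r : ℕ), r ≤ d → ∀ (t u : Fin r → K),
    (∀ i, t i ≠ 0 ∨ u i ≠ 0) →
    (∀ i j, i ≠ j → t i * u j ≠ t j * u i) →
    ∀ (Z : ℕ → K),
    (∀ b, b + r ≤ d → ∑ m ∈ range (r+1),
      (∏ i, (Polynomial.C (u i) - Polynomial.C (t i) * Polynomial.X)).coeff m * Z (m + b) = 0) →
    ∃ μ : Fin r → K, ∀ n, n ≤ d → Z n = ∑ i, μ i * t i ^ (d - n) * u i ^ n := by
  intro r
  induction r with
  | zero =>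
    intro _ t u _ _ Z hrel
    refine ⟨Fin.elim0, fun n hn => ?_⟩
    have := hrel n (by omega)
    simpa using this
  | succ r ih =>
    intro hrd t u hnz hdist Z hrel
    set t' : Fin r → K := fun i => t i.castSucc with ht'
    set u' : Fin r → K := fun i => u i.castSucc with hu'
    set tl := t (Fin.last r) with htl
    set ul := u (Fin.last r) with hul
    set P := ∏ i : Fin r, (Polynomial.C (u' i) - Polynomial.C (t' i) * Polynomial.X) with hP
    set W : ℕ → K := fun n => ∑ m ∈ range (r+1), P.coeff m * Z (m + n) with hW
    set D := d - r with hD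
    have hDd : r + D = d := by omega
    have hD1 : 1 ≤ D := by omega
    -- recurrence for W
    have hWrec : ∀ b, b + 1 ≤ D → ul * W b = tl * W (b + 1) := by
      intro b hb
      have h0 := hrel b (by omega)
      rw [Fin.prod_univ_castSucc
        (f := fun i => (Polynomial.C (u i) - Polynomial.C (t i) * Polynomial.X : Polynomial K))] at h0
      rw [← hP] at h0
      have e0 : ∀ m ∈ range (r+1+1),
          (P * (Polynomial.C ul - Polynomial.C tl * Polynomial.X)).coeff m * Z (m + b)
          = ul * (P.coeff m * Z (m+b)) - tl * ((P * Polynomial.X).coeff m * Z (m + b)) := by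
        intro m hm
        rw [coeff_mul_lin]
        ring
      rw [Finset.sum_congr rfl e0, Finset.sum_sub_distrib, ← Finset.mul_sum, ← Finset.mul_sum] at h0
      have S1 : ∑ m ∈ range (r+1+1), P.coeff m * Z (m + b) = W b := by
        rw [Finset.sum_range_succ, pcoeff_zero r t' u' (r+1) (by omega)]
        simp [hW]
      have S2 : ∑ m ∈ range (r+1+1), (P * Polynomial.X).coeff m * Z (m + b) = W (b+1) := by
        rw [Finset.sum_range_succ']
        have hz : (P * Polynomial.X).coeff 0 = 0 := by simp [Polynomial.coeff_mul_X_zero]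
        rw [hz]
        simp only [zero_mul, add_zero, Polynomial.coeff_mul_X]
        rw [hW]
        exact Finset.sum_congr rfl fun m hm => by
          rw [show m + 1 + b = m + (b + 1) from by omega]
      rw [S1, S2] at h0
      linear_combination h0
    -- solve the recurrence
    obtain ⟨lam, hlam⟩ : ∃ lam : K, ∀ n, n ≤ D → W n = lam * tl ^ (D - n) * ul ^ n := by
      by_cases htl0 : tl = 0
      · have hul0 : ul ≠ 0 := (hnz (Fin.last r)).resolve_left (by simpa [htl] using htl0)
        refine ⟨W D / ul ^ D, fun n hn => ?_⟩
        rcases eq_or_lt_of_le hn with h | h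
        · subst h
          rw [Nat.sub_self, pow_zero]
          field_simp
        · have : ul * W n = 0 := by
            rw [hWrec n (by omega), htl0, zero_mul]
          have hWn : W n = 0 := by
            rcases mul_eq_zero.mp this with h' | h'
            · exact absurd h' hul0
            · exact h'
          rw [hWn, htl0, zero_pow (by omega : D - n ≠ 0)]
          ring
      · refine ⟨W 0 / tl ^ D, fun n => ?_⟩
        induction n with
        | zero =>
          intro _
          rw [Nat.sub_zero, pow_zero]
          field_simp
        | succ n ihn =>
          intro hn
          have h1 := hWrec n (by omega)
          have h2 := ihn (by omega)
          have hpow : tl ^ (D - n) = tl ^ (D - (n+1)) * tl := by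
            rw [← pow_succ, show D - (n+1) + 1 = D - n from by omega]
          have h3 : W (n+1) = ul * W n / tl := by
            field_simp
            linear_combination -h1
          rw [h3, h2, hpow]
          field_simp
          ring
    -- the nonvanishing product
    set A := ∏ i : Fin r, (u' i * tl - t' i * ul) with hA
    have hAne : A ≠ 0 := by
      rw [hA]
      apply Finset.prod_ne_zero_iff.mpr
      intro i _
      have hne : (i.castSucc : Fin (r+1)) ≠ Fin.last r := (Fin.castSucc_lt_last i).ne
      have := hdist i.castSucc (Fin.last r) hne
      intro hzero
      apply this
      have : u' i * tl = t' i * ul := sub_eq_zero.mp hzero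
      calc t i.castSucc * u (Fin.last r) = t' i * ul := rfl
        _ = u' i * tl := this.symm
        _ = t (Fin.last r) * u i.castSucc := by rw [htl, hu']; ring
    have hEA : ∑ m ∈ range (r+1), P.coeff m * tl ^ (r-m) * ul ^ m = A := Esum r t' u' tl ul
    set ν := lam / A with hν
    set Y : ℕ → K := fun n => Z n - ν * tl ^ (d - n) * ul ^ n with hY
    have hYrel : ∀ b, b + r ≤ d → ∑ m ∈ range (r+1), P.coeff m * Y (m + b) = 0 := by
      intro b hb
      have hbD : b ≤ D := by omega
      have split : ∑ m ∈ range (r+1), P.coeff m * Y (m + b)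
          = (∑ m ∈ range (r+1), P.coeff m * Z (m + b))
            - ν * ∑ m ∈ range (r+1), tl ^ (D - b) * ul ^ b * (P.coeff m * tl ^ (r-m) * ul ^ m) := by
        rw [Finset.mul_sum, ← Finset.sum_sub_distrib]
        apply Finset.sum_congr rfl
        intro m hm
        have hmr : m ≤ r := by have := Finset.mem_range.mp hm; omega
        simp only [hY]
        rw [show d - (m + b) = (r - m) + (D - b) from by omega, pow_add, pow_add]
        ring
      have hWb : ∑ m ∈ range (r+1), P.coeff m * Z (m + b) = W b := by simp [hW]
      have hsum2 : ∑ m ∈ range (r+1), tl ^ (D - b) * ul ^ b * (P.coeff m * tl ^ (r-m) * ul ^ m)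
          = tl ^ (D - b) * ul ^ b * A := by
        rw [← Finset.mul_sum, hEA]
      rw [split, hWb, hsum2, hlam b hbD, hν]
      field_simp
      ring
    have hnz' : ∀ i, t' i ≠ 0 ∨ u' i ≠ 0 := fun i => hnz i.castSucc
    have hdist' : ∀ i j, i ≠ j → t' i * u' j ≠ t' j * u' i := fun i j hij =>
      hdist i.castSucc j.castSucc (fun h => hij (Fin.castSucc_injective r h))
    obtain ⟨μ', hμ'⟩ := ih (by omega) t' u' hnz' hdist' Y (fun b hb => hYrel b hb)
    refine ⟨Fin.snoc μ' ν, fun n hn => ?_⟩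
    rw [Fin.sum_univ_castSucc]
    simp only [Fin.snoc_castSucc, Fin.snoc_last]
    have h4 : Z n - ν * tl ^ (d - n) * ul ^ n
        = ∑ i : Fin r, μ' i * t' i ^ (d - n) * u' i ^ n := hμ' n hn
    linear_combination h4

lemma powExpand (d : ℕ) (a b : K) :
    ((C a * X 0 + C b * X 1 : MvPolynomial (Fin 2) K)) ^ d
      = ∑ i ∈ range (d+1),
          (d.choose i : K) • (C (a^(d-i) * b^i) * X 0^(d-i) * X (1:Fin 2)^i) := by
  rw [add_pow, ← Finset.sum_range_reflect]
  apply Finset.sum_congr rfl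
  intro i hi
  have hid : i ≤ d := by have := Finset.mem_range.mp hi; omega
  rw [show d + 1 - 1 - i = d - i from by omega, show d - (d - i) = i from by omega,
    Nat.choose_symm hid, MvPolynomial.smul_eq_C_mul, ← C_eq_coe_nat]
  rw [mul_pow, mul_pow, map_mul, C_pow, C_pow]
  ring

/-- If the kernel polynomial `f = Π (uᵢx - tᵢy)` of the catalecticant of `q` has `k+1`
distinct roots `[tᵢ, uᵢ]`, then `q` is a linear combination of `(tᵢx + uᵢy)^d`; hence
`q` is a sum of `k+1` `d`-th powers of linear forms. -/
theorem stmt17 (K : Type) [Field K] [IsAlgClosed K] [CharZero K] (d k : ℕ) (hk : k + 1 ≤ d)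
    (Z : ℕ → K) (φ : Module.Dual K (MvPolynomial (Fin 2) K))
    (hφ : ∀ i, i ≤ d → φ (X 0 ^ (d - i) * X 1 ^ i) = Z i)
    (q : MvPolynomial (Fin 2) K)
    (hq : q = ∑ i ∈ Finset.range (d + 1),
      (d.choose i : K) • (C (Z i) * X 0 ^ (d - i) * X 1 ^ i))
    (hrank : (Matrix.of fun (i : Fin (d - k)) (j : Fin (k + 2)) =>
        Z ((i : ℕ) + (j : ℕ))).rank = k + 1)
    (t u : Fin (k + 1) → K)
    (hnz : ∀ i, t i ≠ 0 ∨ u i ≠ 0)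
    (hdist : ∀ i j, i ≠ j → t i * u j ≠ t j * u i)
    (hker : ∀ h : MvPolynomial (Fin 2) K, h.IsHomogeneous (d - k - 1) →
      φ ((∏ i, (C (u i) * X 0 - C (t i) * X 1)) * h) = 0) :
    (∃ μ : Fin (k + 1) → K,
      q = ∑ i, μ i • (C (t i) * X 0 + C (u i) * X 1) ^ d) ∧
    ∃ L : Fin (k + 1) → Fin 2 → K, q = ∑ i, linForm K (L i) ^ d := by
  have hrel : ∀ b, b + (k+1) ≤ d → ∑ m ∈ range (k+1+1),
      (∏ i, (Polynomial.C (u i) - Polynomial.C (t i) * Polynomial.X)).coeff m * Z (m+b) = 0 := by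
    intro b hb
    have hhom : (X 0 ^ (d-k-1-b) * X 1 ^ b : MvPolynomial (Fin 2) K).IsHomogeneous (d-k-1) := by
      have h1 : (X (0:Fin 2) ^ (d-k-1-b) : MvPolynomial (Fin 2) K).IsHomogeneous (d-k-1-b) := by
        simpa using (MvPolynomial.isHomogeneous_X K (0 : Fin 2)).pow (d-k-1-b)
      have h2 : (X (1:Fin 2) ^ b : MvPolynomial (Fin 2) K).IsHomogeneous b := by
        simpa using (MvPolynomial.isHomogeneous_X K (1 : Fin 2)).pow b
      have h3 := h1.mul h2
      rwa [show d-k-1-b+b = d-k-1 from by omega] at h3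
    have h0 := hker _ hhom
    rw [Fsum (k+1) t u, Finset.sum_mul, map_sum] at h0
    rw [← h0]
    apply Finset.sum_congr rfl
    intro m hm
    have hm' : m ≤ k+1 := by have := Finset.mem_range.mp hm; omega
    have e : (C ((∏ i, (Polynomial.C (u i) - Polynomial.C (t i) * Polynomial.X)).coeff m)
        * X 0 ^ (k+1-m) * X (1:Fin 2) ^ m) * (X 0 ^ (d-k-1-b) * X 1 ^ b)
        = ((∏ i, (Polynomial.C (u i) - Polynomial.C (t i) * Polynomial.X)).coeff m)
            • (X (0:Fin 2) ^ (d - (m+b)) * X 1 ^ (m+b)) := by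
      rw [MvPolynomial.smul_eq_C_mul,
        show d - (m+b) = (k+1-m) + (d-k-1-b) from by omega, pow_add,
        show m + b = m + b from rfl, pow_add]
      ring
    rw [e, map_smul, hφ (m+b) (by omega)]
    rfl
  obtain ⟨μ, hμ⟩ := keyrec d (k+1) hk t u hnz hdist Z hrel
  have main : q = ∑ i, μ i • (C (t i) * X 0 + C (u i) * X 1) ^ d := by
    rw [hq]
    calc ∑ n ∈ range (d+1), (d.choose n : K) • (C (Z n) * X 0 ^ (d-n) * X 1 ^ n)
        = ∑ n ∈ range (d+1), ∑ i : Fin (k+1),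
            μ i • ((d.choose n : K) • (C (t i ^(d-n) * u i ^ n) * X 0^(d-n) * X (1:Fin 2)^n)) := by
          apply Finset.sum_congr rfl
          intro n hn
          rw [hμ n (by have := Finset.mem_range.mp hn; omega), map_sum, Finset.sum_mul,
            Finset.sum_mul, Finset.smul_sum]
          apply Finset.sum_congr rfl
          intro i _
          simp only [MvPolynomial.smul_eq_C_mul, map_mul]
          ring
      _ = ∑ i : Fin (k+1), μ i • ∑ n ∈ range (d+1),
            (d.choose n : K) • (C (t i ^(d-n) * u i ^ n) * X 0^(d-n) * X (1:Fin 2)^n) := by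
          rw [Finset.sum_comm]
          apply Finset.sum_congr rfl
          intro i _
          rw [Finset.smul_sum]
      _ = ∑ i, μ i • (C (t i) * X 0 + C (u i) * X 1) ^ d := by
          apply Finset.sum_congr rfl
          intro i _
          rw [← powExpand d (t i) (u i)]
  refine ⟨⟨μ, main⟩, ?_⟩
  have hd0 : 0 < d := by omega
  choose c hc using fun i => IsAlgClosed.exists_pow_nat_eq (μ i) (n := d) hd0
  refine ⟨fun i => ![c i * t i, c i * u i], ?_⟩
  rw [main]
  apply Finset.sum_congr rfl
  intro i _
  rw [linForm]
  simp only [Matrix.cons_val_zero, Matrix.cons_val_one, Matrix.head_cons]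
  rw [show (C (c i * t i) * X 0 + C (c i * u i) * X 1 : MvPolynomial (Fin 2) K)
      = C (c i) * (C (t i) * X 0 + C (u i) * X 1) from by rw [map_mul, map_mul]; ring]
  rw [mul_pow, ← C_pow, hc i, MvPolynomial.smul_eq_C_mul]
end
end
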